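/- arXiv:1204.2034 — 10 statements merged into one kernel-verified Lean document; each statement's English description precedes it below -/
import Mathlib

section
/- For every k with 1 ≤ k ≤ n, the maximum of F over all prefixes of {1,…,n} (i.e., over {F∅} ∪ {F[1,r] : 1 ≤ r ≤ n}) equals the maximum of the following two quantities: (i) the maximum of F over all prefixes of {1,…,k−1} (i.e., over {F∅} ∪ {F[1,r] : 1 ≤ r ≤ k−1}); (ii) the maximum, over all L in {F∅} ∪ {F[k+1,r] : k+1 ≤ r ≤ n}, of g(g(Fpre, F[k,k]), L), where Fpre = F[1,k−1] if k ≥ 2 and Fpre = F∅ if k = 1. -/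
/-- Splitting the maximum of a monotone decomposable interval score
over prefixes at a position `k`: the maximum of `F` over all prefixes of `{1,…,n}`
(including the empty interval) equals the max of (i) the maximum over prefixes of
`{1,…,k-1}`, and (ii) the maximum of `g (g Fpre (F k k)) L` over prefixes `L`
starting at `k+1` (or empty), where `Fpre = F 1 (k-1)` if `k ≥ 2` and `Fpre = Fe`
if `k = 1`. -/
theorem mcs_prefix_split_at_k (n : ℕ) (hn : 1 ≤ n) (F : ℕ → ℕ → ℝ) (Fe : ℝ)
    (g : ℝ → ℝ → ℝ)
    (hg₁ : ∀ y : ℝ, Monotone (fun x => g x y))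
    (hg₂ : ∀ x : ℝ, Monotone (g x))
    (hsplit : ∀ l m r : ℕ, 1 ≤ l → l ≤ m → m < r → r ≤ n →
      F l r = g (F l m) (F (m+1) r))
    (hel : ∀ l r : ℕ, 1 ≤ l → l ≤ r → r ≤ n → F l r = g Fe (F l r))
    (her : ∀ l r : ℕ, 1 ≤ l → l ≤ r → r ≤ n → F l r = g (F l r) Fe)
    (hee : Fe = g Fe Fe)
    (k : ℕ) (hk₁ : 1 ≤ k) (hkn : k ≤ n) :
    sSup ({Fe} ∪ {x : ℝ | ∃ r : ℕ, 1 ≤ r ∧ r ≤ n ∧ x = F 1 r}) =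
      max
        (sSup ({Fe} ∪ {x : ℝ | ∃ r : ℕ, 1 ≤ r ∧ r ≤ k - 1 ∧ x = F 1 r}))
        (sSup {x : ℝ |
          ∃ L ∈ ({Fe} ∪ {y : ℝ | ∃ r : ℕ, k + 1 ≤ r ∧ r ≤ n ∧ y = F (k+1) r} : Set ℝ),
          x = g (g (if 2 ≤ k then F 1 (k-1) else Fe) (F k k)) L}) := by
  set c : ℝ := g (if 2 ≤ k then F 1 (k-1) else Fe) (F k k) with hc
  set A : Set ℝ := {Fe} ∪ {x : ℝ | ∃ r : ℕ, 1 ≤ r ∧ r ≤ k - 1 ∧ x = F 1 r} with hA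
  set B : Set ℝ := {x : ℝ |
      ∃ L ∈ ({Fe} ∪ {y : ℝ | ∃ r : ℕ, k + 1 ≤ r ∧ r ≤ n ∧ y = F (k+1) r} : Set ℝ),
      x = g c L} with hB
  -- key fact : F 1 k = c
  have hFk : F 1 k = c := by
    by_cases h2 : 2 ≤ k
    · have hk1 : 1 ≤ k - 1 := by omega
      have := hsplit 1 (k-1) k le_rfl hk1 (by omega) hkn
      rw [hc, if_pos h2]
      have hkk : k - 1 + 1 = k := by omega
      rw [this, hkk]
    · have hk1 : k = 1 := by omega
      subst hk1
      rw [hc, if_neg h2]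
      exact hel 1 1 le_rfl le_rfl hn
  -- the big set equals A ∪ B
  have hset : ({Fe} ∪ {x : ℝ | ∃ r : ℕ, 1 ≤ r ∧ r ≤ n ∧ x = F 1 r}) = A ∪ B := by
    ext x
    constructor
    · rintro (hx | ⟨r, hr1, hrn, rfl⟩)
      · exact Or.inl (Or.inl hx)
      · by_cases hrk : r ≤ k - 1
        · exact Or.inl (Or.inr ⟨r, hr1, hrk, rfl⟩)
        · have hkr : k ≤ r := by omega
          rcases eq_or_lt_of_le hkr with hkr' | hkr'
          · subst hkr'
            refine Or.inr ⟨Fe, Or.inl rfl, ?_⟩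
            rw [← hFk]
            exact her 1 k le_rfl hk₁ hkn
          · refine Or.inr ⟨F (k+1) r, Or.inr ⟨r, by omega, hrn, rfl⟩, ?_⟩
            rw [← hFk]
            exact hsplit 1 k r le_rfl hk₁ hkr' hrn
    · rintro ((hx | ⟨r, hr1, hrk, rfl⟩) | ⟨L, hL, rfl⟩)
      · exact Or.inl hx
      · exact Or.inr ⟨r, hr1, by omega, rfl⟩
      · rcases hL with hL | ⟨r, hr1, hrn, rfl⟩
        · subst hL
          refine Or.inr ⟨k, hk₁, hkn, ?_⟩
          rw [← hFk]
          exact (her 1 k le_rfl hk₁ hkn).symm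
        · refine Or.inr ⟨r, by omega, hrn, ?_⟩
          rw [← hFk]
          exact (hsplit 1 k r le_rfl hk₁ (by omega) hrn).symm
  -- finiteness
  have hAfin : A.Finite := by
    apply Set.Finite.union (Set.finite_singleton _)
    apply Set.Finite.subset ((Set.finite_Icc 1 (k-1)).image (F 1))
    rintro x ⟨r, hr1, hr2, rfl⟩
    exact ⟨r, ⟨hr1, hr2⟩, rfl⟩
  have hBfin : B.Finite := by
    apply Set.Finite.subset
      (((Set.finite_singleton Fe).union ((Set.finite_Icc (k+1) n).image (F (k+1)))).image (g c))
    rintro x ⟨L, hL, rfl⟩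
    refine ⟨L, ?_, rfl⟩
    rcases hL with hL | ⟨r, hr1, hrn, rfl⟩
    · exact Or.inl hL
    · exact Or.inr ⟨r, ⟨hr1, hrn⟩, rfl⟩
  have hAne : A.Nonempty := ⟨Fe, Or.inl rfl⟩
  have hBne : B.Nonempty := ⟨g c Fe, ⟨Fe, Or.inl rfl, rfl⟩⟩
  rw [hset, csSup_union hAfin.bddAbove hAne hBfin.bddAbove hBne]
end

section
/- For any permutation π of {1,…,n} with local insertion complexity λ and inv(π) inversions, one has inv(π) ≥ λ/2 − n. -/
/-- For a permutation `π` of `{1,…,n}` with local insertion complexity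
`λ = Σ_{j=2}^n |r_j − r_{j−1}|` (where `r_j` is the rank of `π j` among
`π 1, …, π j`) and `inv π` inversions, one has `inv π ≥ λ/2 − n`. -/
theorem inversions_ge_half_lambda_sub_n (n : ℕ) (π : ℕ → ℕ)
    (hπ : Set.BijOn π (Set.Icc 1 n) (Set.Icc 1 n)) :
    (((((Finset.Icc 1 n) ×ˢ (Finset.Icc 1 n)).filter
        (fun q => q.1 < q.2 ∧ π q.2 < π q.1)).card : ℝ)) ≥
      ((∑ j ∈ Finset.Icc 2 n,
          |((((Finset.Icc 1 j).filter (fun i => π i ≤ π j)).card : ℤ)) -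
            ((((Finset.Icc 1 (j-1)).filter (fun i => π i ≤ π (j-1))).card : ℤ))| : ℤ) : ℝ)
        / 2 - (n : ℝ) := by
  set r : ℕ → ℕ := fun j => ((Finset.Icc 1 j).filter (fun i => π i ≤ π j)).card with hr
  set d : ℕ → ℕ := fun j => ((Finset.Icc 1 (j-1)).filter (fun i => π j < π i)).card with hd
  have key : ∀ j, 1 ≤ j → r j + d j = j := by
    intro j hj
    have hsplit := Finset.card_filter_add_card_filter_not
      (s := Finset.Icc 1 j) (p := fun i => π i ≤ π j)
    have hneg : (Finset.Icc 1 j).filter (fun i => ¬ π i ≤ π j)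
        = (Finset.Icc 1 (j-1)).filter (fun i => π j < π i) := by
      ext i
      simp only [Finset.mem_filter, Finset.mem_Icc, not_le]
      constructor
      · rintro ⟨⟨h1, h2⟩, h3⟩
        have : i ≠ j := by rintro rfl; exact lt_irrefl _ h3
        exact ⟨⟨h1, by omega⟩, h3⟩
      · rintro ⟨⟨h1, h2⟩, h3⟩
        exact ⟨⟨h1, by omega⟩, h3⟩
    rw [hneg] at hsplit
    simpa [Nat.card_Icc] using hsplit
  -- inversion count equals sum of d
  have hinv : (((Finset.Icc 1 n) ×ˢ (Finset.Icc 1 n)).filter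
      (fun q => q.1 < q.2 ∧ π q.2 < π q.1)).card = ∑ j ∈ Finset.Icc 1 n, d j := by
    rw [Finset.card_filter, Finset.sum_product_right]
    refine Finset.sum_congr rfl ?_
    intro j hj
    rw [← Finset.card_filter]
    congr 1
    ext i
    simp only [Finset.mem_Icc] at hj
    simp only [Finset.mem_filter, Finset.mem_Icc]
    constructor
    · rintro ⟨⟨h1, h2⟩, h3, h4⟩
      exact ⟨⟨h1, by omega⟩, h4⟩
    · rintro ⟨⟨h1, h2⟩, h3⟩
      exact ⟨⟨h1, by omega⟩, by omega, h3⟩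
  -- pointwise bound
  have hterm : ∀ j ∈ Finset.Icc 2 n,
      |(r j : ℤ) - (r (j-1) : ℤ)| ≤ (d j : ℤ) + (d (j-1) : ℤ) + 1 := by
    intro j hj
    simp only [Finset.mem_Icc] at hj
    have h1 := key j (by omega)
    have h2 := key (j-1) (by omega)
    rw [abs_sub_le_iff]
    omega
  have hsum : (∑ j ∈ Finset.Icc 2 n, |(r j : ℤ) - (r (j-1) : ℤ)|)
      ≤ ∑ j ∈ Finset.Icc 2 n, ((d j : ℤ) + (d (j-1) : ℤ) + 1) :=
    Finset.sum_le_sum hterm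
  have hA : ∑ j ∈ Finset.Icc 2 n, d j ≤ ∑ j ∈ Finset.Icc 1 n, d j :=
    Finset.sum_le_sum_of_subset (by intro x; simp only [Finset.mem_Icc]; omega)
  have hB : ∑ j ∈ Finset.Icc 2 n, d (j-1) ≤ ∑ j ∈ Finset.Icc 1 n, d j := by
    have himg : ∑ j ∈ Finset.Icc 2 n, d (j-1)
        = ∑ k ∈ (Finset.Icc 2 n).image (· - 1), d k := by
      rw [Finset.sum_image]
      intro a ha b hb hab
      simp only [Finset.coe_Icc, Set.mem_Icc] at ha hb hab
      omega
    rw [himg]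
    refine Finset.sum_le_sum_of_subset ?_
    intro x hx
    simp only [Finset.mem_image, Finset.mem_Icc] at hx ⊢
    obtain ⟨a, ha, rfl⟩ := hx
    omega
  have hcard : (Finset.Icc 2 n).card ≤ n := by
    rw [Nat.card_Icc]; omega
  -- combine in ℤ
  have hfin : (∑ j ∈ Finset.Icc 2 n, |(r j : ℤ) - (r (j-1) : ℤ)|)
      ≤ 2 * (∑ j ∈ Finset.Icc 1 n, d j : ℕ) + n := by
    have := hsum
    rw [Finset.sum_add_distrib, Finset.sum_add_distrib, Finset.sum_const] at this
    push_cast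
    have hA' : (∑ j ∈ Finset.Icc 2 n, (d j : ℤ)) ≤ ∑ j ∈ Finset.Icc 1 n, (d j : ℤ) := by
      exact_mod_cast hA
    have hB' : (∑ j ∈ Finset.Icc 2 n, (d (j-1) : ℤ)) ≤ ∑ j ∈ Finset.Icc 1 n, (d j : ℤ) := by
      exact_mod_cast hB
    have hc' : ((Finset.Icc 2 n).card : ℤ) ≤ n := by exact_mod_cast hcard
    simp only [nsmul_eq_mul, mul_one] at this
    linarith
  rw [hinv]
  have hgoal : (∑ j ∈ Finset.Icc 2 n,
          |((((Finset.Icc 1 j).filter (fun i => π i ≤ π j)).card : ℤ)) -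
            ((((Finset.Icc 1 (j-1)).filter (fun i => π i ≤ π (j-1))).card : ℤ))|)
      = ∑ j ∈ Finset.Icc 2 n, |(r j : ℤ) - (r (j-1) : ℤ)| := rfl
  rw [hgoal]
  have hfinR : ((∑ j ∈ Finset.Icc 2 n, |(r j:ℤ) - (r (j-1):ℤ)| : ℤ) : ℝ)
      ≤ 2 * ((∑ j ∈ Finset.Icc 1 n, d j : ℕ) : ℝ) + n := by exact_mod_cast hfin
  rw [ge_iff_le, sub_le_iff_le_add, div_le_iff₀ (by norm_num : (0:ℝ) < 2)]
  linarith
end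

section
/- For any permutation π of {1,…,n}, the local insertion complexity satisfies λ ≤ Σ_{j=2}^{n} |π(j) − π(j−1)|. -/
/-- For a permutation `π` of `{1,…,n}`, the local insertion complexity
`λ = Σ_{j=2}^n |r_j − r_{j−1}|` (where `r_j` is the rank of `π j` among
`π 1, …, π j`) satisfies `λ ≤ Σ_{j=2}^n |π j − π (j−1)|`. -/
theorem lambda_le_sum_abs_diff (n : ℕ) (π : ℕ → ℕ)
    (hπ : Set.BijOn π (Set.Icc 1 n) (Set.Icc 1 n)) :
    (∑ j ∈ Finset.Icc 2 n,
        |((((Finset.Icc 1 j).filter (fun i => π i ≤ π j)).card : ℤ)) -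
          ((((Finset.Icc 1 (j-1)).filter (fun i => π i ≤ π (j-1))).card : ℤ))|) ≤
      ∑ j ∈ Finset.Icc 2 n, |((π j : ℤ)) - ((π (j-1) : ℤ))| := by
  apply Finset.sum_le_sum
  intro j hj
  rw [Finset.mem_Icc] at hj
  obtain ⟨hj2, hjn⟩ := hj
  have hinj := hπ.injOn
  have hj1n : (j - 1 : ℕ) ∈ Set.Icc 1 n := ⟨by omega, by omega⟩
  have hjn' : j ∈ Set.Icc 1 n := ⟨by omega, hjn⟩
  set A := Finset.Icc 1 (j-1) with hA
  set a := π (j-1) with ha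
  set b := π j with hb
  have hne : a ≠ b := by
    intro h
    have := hinj hj1n hjn' h
    omega
  -- rank at j: split off the index j
  have hIcc : Finset.Icc 1 j = insert j A := by
    rw [← Finset.Ico_insert_right (by omega : 1 ≤ j)]
    congr 1
  have hjA : j ∉ A := by
    simp only [hA, Finset.mem_Icc]
    omega
  have hr : ((Finset.Icc 1 j).filter (fun i => π i ≤ b)).card
      = (A.filter (fun i => π i ≤ b)).card + 1 := by
    rw [hIcc, Finset.filter_insert, if_pos le_rfl,
      Finset.card_insert_of_notMem (fun h => hjA (Finset.mem_filter.mp h).1)]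
  -- splitting lemma
  have hsplit : ∀ s t : ℕ, s ≤ t → (A.filter (fun i => π i ≤ t)).card
      = (A.filter (fun i => π i ≤ s)).card
        + (A.filter (fun i => s < π i ∧ π i ≤ t)).card := by
    intro s t hst
    have heq : A.filter (fun i => π i ≤ t)
        = A.filter (fun i => π i ≤ s) ∪ A.filter (fun i => s < π i ∧ π i ≤ t) := by
      rw [← Finset.filter_or]
      apply Finset.filter_congr
      intro i _
      constructor
      · intro h; omega
      · intro h; omega
    rw [heq, Finset.card_union_of_disjoint]
    rw [Finset.disjoint_left]
    intro i h1 h2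
    simp only [Finset.mem_filter] at h1 h2
    omega
  -- injectivity on A-filters
  have hinjA : ∀ (p : ℕ → Prop) [DecidablePred p],
      Set.InjOn π (A.filter p) := by
    intro p _ x hx y hy hxy
    simp only [Finset.coe_filter, Set.mem_setOf_eq, hA, Finset.mem_Icc] at hx hy
    exact hinj ⟨hx.1.1, by omega⟩ ⟨hy.1.1, by omega⟩ hxy
  rcases lt_or_gt_of_ne hne with hcase | hcase
  · -- a < b : ascent
    have hmid : (A.filter (fun i => a < π i ∧ π i ≤ b)).card ≤ b - a - 1 := by
      have hle : (A.filter (fun i => a < π i ∧ π i ≤ b)).card ≤ (Finset.Ioo a b).card := by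
        apply Finset.card_le_card_of_injOn π _ (hinjA _)
        intro i hi
        have hi' := hi
        simp only [Finset.mem_coe, Finset.mem_filter, hA, Finset.mem_Icc] at hi'
        have hib : π i ≠ b := by
          intro h
          have := hinj ⟨hi'.1.1, by omega⟩ hjn' h
          omega
        exact Finset.mem_Ioo.mpr ⟨hi'.2.1, lt_of_le_of_ne hi'.2.2 hib⟩
      simpa [Nat.card_Ioo] using hle
    have hsp := hsplit a b (le_of_lt hcase)
    have habs : |(b:ℤ) - (a:ℤ)| = (b:ℤ) - (a:ℤ) := abs_of_nonneg (by omega)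
    rw [hr, habs, abs_le]
    constructor <;> omega
  · -- b < a : descent
    have hmid : (A.filter (fun i => b < π i ∧ π i ≤ a)).card ≤ a - b := by
      have hle : (A.filter (fun i => b < π i ∧ π i ≤ a)).card ≤ (Finset.Ioc b a).card := by
        apply Finset.card_le_card_of_injOn π _ (hinjA _)
        intro i hi
        simp only [Finset.mem_coe, Finset.mem_filter] at hi
        exact Finset.mem_Ioc.mpr hi.2
      simpa [Nat.card_Ioc] using hle
    have hsp := hsplit b a (le_of_lt hcase)
    -- strictness: j-1 is counted with threshold a but not b
    have hmem : j - 1 ∈ A.filter (fun i => b < π i ∧ π i ≤ a) := by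
      simp only [Finset.mem_filter, hA, Finset.mem_Icc]
      exact ⟨⟨by omega, le_refl _⟩, hcase, le_refl a⟩
    have hpos : 1 ≤ (A.filter (fun i => b < π i ∧ π i ≤ a)).card :=
      Finset.card_pos.mpr ⟨j - 1, hmem⟩
    have habs : |(b:ℤ) - (a:ℤ)| = (a:ℤ) - (b:ℤ) := by
      rw [abs_sub_comm]; exact abs_of_nonneg (by omega)
    rw [hr, habs, abs_le]
    constructor <;> omega
end

section
/- Let A ⊆ ℝ² be a finite set in general position with |A| ≥ 2 that does not admit a diagonalization. Then the point of A with minimum x-coordinate, the point with maximum x-coordinate, the point with minimum y-coordinate, and the point with maximum y-coordinate are four pairwise distinct points; equivalently, A has exactly four extreme points. -/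
/-- A finite planar point set is in general position if no two distinct points
share an `x`- or a `y`-coordinate. -/
def GenPos (A : Finset (ℝ × ℝ)) : Prop :=
  ∀ p ∈ A, ∀ q ∈ A, p ≠ q → p.1 ≠ q.1 ∧ p.2 ≠ q.2

/-- `IsDiag A A₁ A₂` : `{A₁, A₂}` is a diagonalization of `A`, witnessed by a
point `c` such that `A₁` and `A₂` lie in opposite open quadrants of `c`
(either bottom-up or top-down). -/
def IsDiag (A A₁ A₂ : Finset (ℝ × ℝ)) : Prop :=
  A₁.Nonempty ∧ A₂.Nonempty ∧ Disjoint A₁ A₂ ∧ A₁ ∪ A₂ = A ∧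
    ∃ c : ℝ × ℝ,
      ((∀ p ∈ A₁, p.1 < c.1 ∧ p.2 < c.2) ∧ (∀ q ∈ A₂, c.1 < q.1 ∧ c.2 < q.2)) ∨
      ((∀ p ∈ A₁, p.1 < c.1 ∧ c.2 < p.2) ∧ (∀ q ∈ A₂, c.1 < q.1 ∧ q.2 < c.2))

/-- `A` admits a diagonalization. -/
def HasDiag (A : Finset (ℝ × ℝ)) : Prop := ∃ A₁ A₂, IsDiag A A₁ A₂

lemma erase_nonempty_of_two_le {A : Finset (ℝ × ℝ)} {p : ℝ × ℝ}
    (hcard : 2 ≤ A.card) : (A.erase p).Nonempty := by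
  rw [← Finset.card_pos]
  have := Finset.pred_card_le_card_erase (s := A) (a := p)
  omega

/-- A strictly leftmost point that is also strictly bottom- or top-most gives a
diagonalization. -/
lemma diag_of_left (A : Finset (ℝ × ℝ)) (p : ℝ × ℝ) (hp : p ∈ A)
    (hcard : 2 ≤ A.card)
    (hx : ∀ q ∈ A, q ≠ p → p.1 < q.1)
    (hy : (∀ q ∈ A, q ≠ p → p.2 < q.2) ∨ (∀ q ∈ A, q ≠ p → q.2 < p.2)) :
    HasDiag A := by
  classical
  set B := A.erase p with hBdef
  have hB : B.Nonempty := erase_nonempty_of_two_le hcard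
  have hBmem : ∀ q ∈ B, q ∈ A ∧ q ≠ p := fun q hq =>
    ⟨Finset.mem_of_mem_erase hq, Finset.ne_of_mem_erase hq⟩
  set m1 := B.inf' hB Prod.fst with hm1def
  have hm1 : p.1 < m1 := by
    rw [hm1def, Finset.lt_inf'_iff]
    intro q hq; exact hx q (hBmem q hq).1 (hBmem q hq).2
  have hm1le : ∀ q ∈ B, m1 ≤ q.1 := fun q hq => Finset.inf'_le _ hq
  have hdisj : Disjoint ({p} : Finset (ℝ × ℝ)) B := by
    simp [hBdef]
  have hunion : ({p} : Finset (ℝ × ℝ)) ∪ B = A := by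
    ext q
    simp only [hBdef, Finset.mem_union, Finset.mem_singleton, Finset.mem_erase]
    constructor
    · rintro (rfl | ⟨-, h⟩) <;> [exact hp; exact h]
    · intro h; by_cases hq : q = p <;> simp [hq, h]
  rcases hy with hy | hy
  · -- p is bottom-left : bottom-up diagonalization with A₁ = {p}
    set m2 := B.inf' hB Prod.snd with hm2def
    have hm2 : p.2 < m2 := by
      rw [hm2def, Finset.lt_inf'_iff]
      intro q hq; exact hy q (hBmem q hq).1 (hBmem q hq).2
    have hm2le : ∀ q ∈ B, m2 ≤ q.2 := fun q hq => Finset.inf'_le _ hq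
    refine ⟨{p}, B, Finset.singleton_nonempty p, hB, hdisj, hunion,
      ((p.1 + m1) / 2, (p.2 + m2) / 2), Or.inl ⟨?_, ?_⟩⟩
    · intro q hq; rw [Finset.mem_singleton] at hq; subst hq
      constructor <;> [skip; skip] <;> dsimp <;> linarith
    · intro q hq
      have := hm1le q hq; have := hm2le q hq
      constructor <;> dsimp <;> linarith
  · -- p is top-left : top-down diagonalization with A₁ = {p}
    set m2 := B.sup' hB Prod.snd with hm2def
    have hm2 : m2 < p.2 := by
      rw [hm2def, Finset.sup'_lt_iff]
      intro q hq; exact hy q (hBmem q hq).1 (hBmem q hq).2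
    have hm2le : ∀ q ∈ B, q.2 ≤ m2 := fun q hq => Finset.le_sup' _ hq
    refine ⟨{p}, B, Finset.singleton_nonempty p, hB, hdisj, hunion,
      ((p.1 + m1) / 2, (m2 + p.2) / 2), Or.inr ⟨?_, ?_⟩⟩
    · intro q hq; rw [Finset.mem_singleton] at hq; subst hq
      constructor <;> dsimp <;> linarith
    · intro q hq
      have := hm1le q hq; have := hm2le q hq
      constructor <;> dsimp <;> linarith

/-- A strictly rightmost point that is also strictly bottom- or top-most gives a
diagonalization. -/
lemma diag_of_right (A : Finset (ℝ × ℝ)) (p : ℝ × ℝ) (hp : p ∈ A)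
    (hcard : 2 ≤ A.card)
    (hx : ∀ q ∈ A, q ≠ p → q.1 < p.1)
    (hy : (∀ q ∈ A, q ≠ p → p.2 < q.2) ∨ (∀ q ∈ A, q ≠ p → q.2 < p.2)) :
    HasDiag A := by
  classical
  set B := A.erase p with hBdef
  have hB : B.Nonempty := erase_nonempty_of_two_le hcard
  have hBmem : ∀ q ∈ B, q ∈ A ∧ q ≠ p := fun q hq =>
    ⟨Finset.mem_of_mem_erase hq, Finset.ne_of_mem_erase hq⟩
  set m1 := B.sup' hB Prod.fst with hm1def
  have hm1 : m1 < p.1 := by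
    rw [hm1def, Finset.sup'_lt_iff]
    intro q hq; exact hx q (hBmem q hq).1 (hBmem q hq).2
  have hm1le : ∀ q ∈ B, q.1 ≤ m1 := fun q hq => Finset.le_sup' _ hq
  have hdisj : Disjoint B ({p} : Finset (ℝ × ℝ)) := by
    simp [hBdef]
  have hunion : B ∪ ({p} : Finset (ℝ × ℝ)) = A := by
    ext q
    simp only [hBdef, Finset.mem_union, Finset.mem_singleton, Finset.mem_erase]
    constructor
    · rintro (⟨-, h⟩ | rfl) <;> [exact h; exact hp]
    · intro h; by_cases hq : q = p <;> simp [hq, h]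
  rcases hy with hy | hy
  · -- p is bottom-right : top-down diagonalization with A₂ = {p}
    set m2 := B.inf' hB Prod.snd with hm2def
    have hm2 : p.2 < m2 := by
      rw [hm2def, Finset.lt_inf'_iff]
      intro q hq; exact hy q (hBmem q hq).1 (hBmem q hq).2
    have hm2le : ∀ q ∈ B, m2 ≤ q.2 := fun q hq => Finset.inf'_le _ hq
    refine ⟨B, {p}, hB, Finset.singleton_nonempty p, hdisj, hunion,
      ((m1 + p.1) / 2, (p.2 + m2) / 2), Or.inr ⟨?_, ?_⟩⟩
    · intro q hq
      have := hm1le q hq; have := hm2le q hq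
      constructor <;> dsimp <;> linarith
    · intro q hq; rw [Finset.mem_singleton] at hq; subst hq
      constructor <;> dsimp <;> linarith
  · -- p is top-right : bottom-up diagonalization with A₂ = {p}
    set m2 := B.sup' hB Prod.snd with hm2def
    have hm2 : m2 < p.2 := by
      rw [hm2def, Finset.sup'_lt_iff]
      intro q hq; exact hy q (hBmem q hq).1 (hBmem q hq).2
    have hm2le : ∀ q ∈ B, q.2 ≤ m2 := fun q hq => Finset.le_sup' _ hq
    refine ⟨B, {p}, hB, Finset.singleton_nonempty p, hdisj, hunion,
      ((m1 + p.1) / 2, (m2 + p.2) / 2), Or.inl ⟨?_, ?_⟩⟩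
    · intro q hq
      have := hm1le q hq; have := hm2le q hq
      constructor <;> dsimp <;> linarith
    · intro q hq; rw [Finset.mem_singleton] at hq; subst hq
      constructor <;> dsimp <;> linarith

/-- if a general-position set `A` with `|A| ≥ 2` admits no
diagonalization, then the points realizing the minimum `x`, maximum `x`, minimum
`y` and maximum `y` coordinates are four pairwise distinct points (i.e. `A` has
exactly four extreme points). -/
theorem no_diag_implies_four_extreme_points (A : Finset (ℝ × ℝ))
    (hA : GenPos A) (hcard : 2 ≤ A.card) (hnd : ¬ HasDiag A)
    (pxmin pxmax pymin pymax : ℝ × ℝ)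
    (h₁ : pxmin ∈ A) (h₂ : pxmax ∈ A) (h₃ : pymin ∈ A) (h₄ : pymax ∈ A)
    (hxmin : ∀ q ∈ A, pxmin.1 ≤ q.1) (hxmax : ∀ q ∈ A, q.1 ≤ pxmax.1)
    (hymin : ∀ q ∈ A, pymin.2 ≤ q.2) (hymax : ∀ q ∈ A, q.2 ≤ pymax.2) :
    pxmin ≠ pxmax ∧ pxmin ≠ pymin ∧ pxmin ≠ pymax ∧
      pxmax ≠ pymin ∧ pxmax ≠ pymax ∧ pymin ≠ pymax := by
  -- strict versions of the extremality hypotheses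
  have sxmin : ∀ q ∈ A, q ≠ pxmin → pxmin.1 < q.1 := fun q hq hne =>
    lt_of_le_of_ne (hxmin q hq) (hA pxmin h₁ q hq hne.symm).1
  have sxmax : ∀ q ∈ A, q ≠ pxmax → q.1 < pxmax.1 := fun q hq hne =>
    lt_of_le_of_ne (hxmax q hq) (hA q hq pxmax h₂ hne).1
  have symin : ∀ q ∈ A, q ≠ pymin → pymin.2 < q.2 := fun q hq hne =>
    lt_of_le_of_ne (hymin q hq) (hA pymin h₃ q hq hne.symm).2
  have symax : ∀ q ∈ A, q ≠ pymax → q.2 < pymax.2 := fun q hq hne =>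
    lt_of_le_of_ne (hymax q hq) (hA q hq pymax h₄ hne).2
  obtain ⟨a, ha, b, hb, hab⟩ := Finset.one_lt_card.mp hcard
  refine ⟨?_, ?_, ?_, ?_, ?_, ?_⟩
  · -- pxmin ≠ pxmax
    intro h
    have h1 : pxmin.1 ≤ a.1 := hxmin a ha
    have h2 : a.1 ≤ pxmax.1 := hxmax a ha
    have h3 : pxmin.1 ≤ b.1 := hxmin b hb
    have h4 : b.1 ≤ pxmax.1 := hxmax b hb
    have := (hA a ha b hb hab).1
    rw [h] at h1 h3
    exact this (by linarith)
  · intro h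
    exact hnd (diag_of_left A pxmin h₁ hcard sxmin (Or.inl (h ▸ symin)))
  · intro h
    exact hnd (diag_of_left A pxmin h₁ hcard sxmin (Or.inr (h ▸ symax)))
  · intro h
    exact hnd (diag_of_right A pxmax h₂ hcard sxmax (Or.inl (h ▸ symin)))
  · intro h
    exact hnd (diag_of_right A pxmax h₂ hcard sxmax (Or.inr (h ▸ symax)))
  · -- pymin ≠ pymax
    intro h
    have h1 : pymin.2 ≤ a.2 := hymin a ha
    have h3 : pymin.2 ≤ b.2 := hymin b hb
    have h2 : a.2 ≤ pymax.2 := hymax a ha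
    have h4 : b.2 ≤ pymax.2 := hymax b hb
    have := (hA a ha b hb hab).2
    rw [h] at h1 h3
    exact this (by linarith)
end

section
/- Let A ⊆ ℝ² be a finite set in general position with |A| ≥ 2 that does not admit a diagonalization. Then there exists a subset W ⊆ A with exactly 4 elements such that W does not admit a diagonalization (i.e., W is a windmill) and W contains at least one extreme point of A. -/
lemma hasDiag_bu (A A1 : Finset (ℝ × ℝ)) (hsub : A1 ⊆ A) (h1 : A1.Nonempty)
    (h2 : (A \ A1).Nonempty)
    (hxy : ∀ p ∈ A1, ∀ q ∈ A \ A1, p.1 < q.1 ∧ p.2 < q.2) : HasDiag A := by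
  obtain ⟨pa, hpa, hpa2⟩ := Finset.exists_max_image A1 (fun p => p.1) h1
  obtain ⟨pb, hpb, hpb2⟩ := Finset.exists_min_image (A \ A1) (fun p => p.1) h2
  obtain ⟨pc, hpc, hpc2⟩ := Finset.exists_max_image A1 (fun p => p.2) h1
  obtain ⟨pd, hpd, hpd2⟩ := Finset.exists_min_image (A \ A1) (fun p => p.2) h2
  refine ⟨A1, A \ A1, h1, h2, Finset.disjoint_sdiff, Finset.union_sdiff_of_subset hsub,
    ((pa.1 + pb.1)/2, (pc.2 + pd.2)/2), Or.inl ⟨?_, ?_⟩⟩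
  · intro p hp
    exact ⟨by linarith [hpa2 p hp, (hxy pa hpa pb hpb).1],
           by linarith [hpc2 p hp, (hxy pc hpc pd hpd).2]⟩
  · intro q hq
    exact ⟨by linarith [hpb2 q hq, (hxy pa hpa pb hpb).1],
           by linarith [hpd2 q hq, (hxy pc hpc pd hpd).2]⟩

lemma hasDiag_td (A A1 : Finset (ℝ × ℝ)) (hsub : A1 ⊆ A) (h1 : A1.Nonempty)
    (h2 : (A \ A1).Nonempty)
    (hxy : ∀ p ∈ A1, ∀ q ∈ A \ A1, p.1 < q.1 ∧ q.2 < p.2) : HasDiag A := by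
  obtain ⟨pa, hpa, hpa2⟩ := Finset.exists_max_image A1 (fun p => p.1) h1
  obtain ⟨pb, hpb, hpb2⟩ := Finset.exists_min_image (A \ A1) (fun p => p.1) h2
  obtain ⟨pc, hpc, hpc2⟩ := Finset.exists_min_image A1 (fun p => p.2) h1
  obtain ⟨pd, hpd, hpd2⟩ := Finset.exists_max_image (A \ A1) (fun p => p.2) h2
  refine ⟨A1, A \ A1, h1, h2, Finset.disjoint_sdiff, Finset.union_sdiff_of_subset hsub,
    ((pa.1 + pb.1)/2, (pc.2 + pd.2)/2), Or.inr ⟨?_, ?_⟩⟩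
  · intro p hp
    exact ⟨by linarith [hpa2 p hp, (hxy pa hpa pb hpb).1],
           by linarith [hpc2 p hp, (hxy pc hpc pd hpd).2]⟩
  · intro q hq
    exact ⟨by linarith [hpb2 q hq, (hxy pa hpa pb hpb).1],
           by linarith [hpd2 q hq, (hxy pc hpc pd hpd).2]⟩

lemma windmill_nodiag (w1 w2 w3 w4 : ℝ × ℝ)
    (hx1 : w1.1 < w2.1) (hx2 : w2.1 < w3.1) (hx3 : w3.1 < w4.1)
    (hpat : (w3.2 < w1.2 ∧ w1.2 < w4.2 ∧ w4.2 < w2.2) ∨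
            (w2.2 < w4.2 ∧ w4.2 < w1.2 ∧ w1.2 < w3.2)) :
    ¬ HasDiag {w1, w2, w3, w4} := by
  rintro ⟨W1, W2, hne1, hne2, hdisj, huni, c, hc⟩
  obtain ⟨p, hp⟩ := hne1
  obtain ⟨q, hq⟩ := hne2
  have hpW : p = w1 ∨ p = w2 ∨ p = w3 ∨ p = w4 := by
    have : p ∈ ({w1, w2, w3, w4} : Finset (ℝ × ℝ)) := huni ▸ Finset.mem_union_left _ hp
    simpa using this
  have hqW : q = w1 ∨ q = w2 ∨ q = w3 ∨ q = w4 := by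
    have : q ∈ ({w1, w2, w3, w4} : Finset (ℝ × ℝ)) := huni ▸ Finset.mem_union_right _ hq
    simpa using this
  have m : ∀ r ∈ ({w1, w2, w3, w4} : Finset (ℝ × ℝ)), r ∈ W1 ∨ r ∈ W2 := by
    intro r hr; rw [← huni] at hr; exact Finset.mem_union.1 hr
  have hple : w1.1 ≤ p.1 := by rcases hpW with rfl | rfl | rfl | rfl <;> linarith
  have hqle : q.1 ≤ w4.1 := by rcases hqW with rfl | rfl | rfl | rfl <;> linarith
  rcases hc with ⟨hL, hR⟩ | ⟨hL, hR⟩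
  · have ha : w1.1 < c.1 := lt_of_le_of_lt hple (hL p hp).1
    have hb : c.1 < w4.1 := lt_of_lt_of_le (hR q hq).1 hqle
    have g1 := (m w1 (by simp)).imp (hL w1) (hR w1)
    have g2 := (m w2 (by simp)).imp (hL w2) (hR w2)
    have g3 := (m w3 (by simp)).imp (hL w3) (hR w3)
    have g4 := (m w4 (by simp)).imp (hL w4) (hR w4)
    rcases hpat with ⟨s1, s2, s3⟩ | ⟨s1, s2, s3⟩ <;>
      rcases g1 with ⟨u1, v1⟩ | ⟨u1, v1⟩ <;> rcases g2 with ⟨u2, v2⟩ | ⟨u2, v2⟩ <;>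
      rcases g3 with ⟨u3, v3⟩ | ⟨u3, v3⟩ <;> rcases g4 with ⟨u4, v4⟩ | ⟨u4, v4⟩ <;> linarith
  · have ha : w1.1 < c.1 := lt_of_le_of_lt hple (hL p hp).1
    have hb : c.1 < w4.1 := lt_of_lt_of_le (hR q hq).1 hqle
    have g1 := (m w1 (by simp)).imp (hL w1) (hR w1)
    have g2 := (m w2 (by simp)).imp (hL w2) (hR w2)
    have g3 := (m w3 (by simp)).imp (hL w3) (hR w3)
    have g4 := (m w4 (by simp)).imp (hL w4) (hR w4)
    rcases hpat with ⟨s1, s2, s3⟩ | ⟨s1, s2, s3⟩ <;>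
      rcases g1 with ⟨u1, v1⟩ | ⟨u1, v1⟩ <;> rcases g2 with ⟨u2, v2⟩ | ⟨u2, v2⟩ <;>
      rcases g3 with ⟨u3, v3⟩ | ⟨u3, v3⟩ <;> rcases g4 with ⟨u4, v4⟩ | ⟨u4, v4⟩ <;> linarith

lemma card_four (w1 w2 w3 w4 : ℝ × ℝ)
    (hx1 : w1.1 < w2.1) (hx2 : w2.1 < w3.1) (hx3 : w3.1 < w4.1) :
    ({w1, w2, w3, w4} : Finset (ℝ × ℝ)).card = 4 := by
  have n12 : w1 ≠ w2 := fun h => by rw [h] at hx1; exact lt_irrefl _ hx1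
  have n13 : w1 ≠ w3 := fun h => by rw [h] at hx1; linarith
  have n14 : w1 ≠ w4 := fun h => by rw [h] at hx1; linarith
  have n23 : w2 ≠ w3 := fun h => by rw [h] at hx2; exact lt_irrefl _ hx2
  have n24 : w2 ≠ w4 := fun h => by rw [h] at hx2; linarith
  have n34 : w3 ≠ w4 := fun h => by rw [h] at hx3; exact lt_irrefl _ hx3
  rw [Finset.card_insert_of_notMem (by simp [n12, n13, n14]),
      Finset.card_insert_of_notMem (by simp [n23, n24]),
      Finset.card_insert_of_notMem (by simp [n34]), Finset.card_singleton]

/-- `w` is an extreme point of `A`: it belongs to `A` and attains the minimum or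
maximum `x`-coordinate, or the minimum or maximum `y`-coordinate, over `A`. -/
def ExtremePt (A : Finset (ℝ × ℝ)) (w : ℝ × ℝ) : Prop :=
  w ∈ A ∧ ((∀ q ∈ A, w.1 ≤ q.1) ∨ (∀ q ∈ A, q.1 ≤ w.1) ∨
           (∀ q ∈ A, w.2 ≤ q.2) ∨ (∀ q ∈ A, q.2 ≤ w.2))

/-- if a general-position set `A` with `|A| ≥ 2` admits no
diagonalization, then `A` contains a windmill (a 4-element subset admitting no
diagonalization) which contains at least one extreme point of `A`. -/
theorem no_diag_implies_windmill (A : Finset (ℝ × ℝ))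
    (hA : GenPos A) (hcard : 2 ≤ A.card) (hnd : ¬ HasDiag A) :
    ∃ W ⊆ A, W.card = 4 ∧ ¬ HasDiag W ∧ ∃ w ∈ W, ExtremePt A w := by
  classical
  have hAne : A.Nonempty := Finset.card_pos.1 (by omega)
  obtain ⟨M, hMA, hMmax⟩ := Finset.exists_max_image A (fun p => p.2) hAne
  -- y-coordinates of distinct points are distinct; points below M strictly
  have ylt : ∀ p ∈ A, p ≠ M → p.2 < M.2 :=
    fun p hp hne => lt_of_le_of_ne (hMmax p hp) ((hA p hp M hMA hne).2)
  -- trichotomy on x versus M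
  have xtri : ∀ p ∈ A, p.1 < M.1 ∨ p = M ∨ M.1 < p.1 := by
    intro p hp
    rcases eq_or_ne p M with rfl | hne
    · exact Or.inr (Or.inl rfl)
    · rcases lt_trichotomy p.1 M.1 with h | h | h
      · exact Or.inl h
      · exact absurd h ((hA p hp M hMA hne).1)
      · exact Or.inr (Or.inr h)
  set P : Finset (ℝ × ℝ) := A.filter (fun p => p.1 < M.1) with hPdef
  set S : Finset (ℝ × ℝ) := A.filter (fun p => M.1 < p.1) with hSdef
  have hPmem : ∀ p, p ∈ P ↔ p ∈ A ∧ p.1 < M.1 := fun p => Finset.mem_filter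
  have hSmem : ∀ p, p ∈ S ↔ p ∈ A ∧ M.1 < p.1 := fun p => Finset.mem_filter
  -- A \ {M} is nonempty
  have hAM : (A \ {M}).Nonempty := by
    rw [← Finset.card_pos, Finset.card_sdiff_of_subset (Finset.singleton_subset_iff.2 hMA)]
    simp; omega
  -- P nonempty
  have hPne : P.Nonempty := by
    by_contra hP
    apply hnd
    apply hasDiag_td A {M} (Finset.singleton_subset_iff.2 hMA) ⟨M, Finset.mem_singleton_self M⟩ hAM
    intro p hp q hq
    rw [Finset.mem_singleton] at hp; subst hp
    rw [Finset.mem_sdiff, Finset.mem_singleton] at hq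
    obtain ⟨hqA, hqM⟩ := hq
    rcases xtri q hqA with h | h | h
    · exact absurd ⟨hqA, h⟩ (fun hh => hP ⟨q, (hPmem q).2 hh⟩)
    · exact absurd h hqM
    · exact ⟨h, ylt q hqA hqM⟩
  -- S nonempty
  have hSne : S.Nonempty := by
    by_contra hS
    apply hnd
    have hsub : A \ {M} ⊆ A := Finset.sdiff_subset
    have hrw : A \ (A \ {M}) = {M} := by
      rw [Finset.sdiff_sdiff_self_left, Finset.inter_singleton_of_mem hMA]
    apply hasDiag_bu A (A \ {M}) hsub hAM (by rw [hrw]; exact ⟨M, Finset.mem_singleton_self M⟩)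
    intro p hp q hq
    rw [hrw, Finset.mem_singleton] at hq; subst hq
    rw [Finset.mem_sdiff, Finset.mem_singleton] at hp
    obtain ⟨hpA, hpM⟩ := hp
    rcases xtri p hpA with h | h | h
    · exact ⟨h, ylt p hpA hpM⟩
    · exact absurd h hpM
    · exact absurd ⟨hpA, h⟩ (fun hh => hS ⟨p, (hSmem p).2 hh⟩)
  obtain ⟨b0, hb0, hb0min⟩ := Finset.exists_min_image P (fun p => p.2) hPne
  obtain ⟨d0, hd0, hd0min⟩ := Finset.exists_min_image S (fun p => p.2) hSne
  obtain ⟨hb0A, hb0x⟩ := (hPmem b0).1 hb0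
  obtain ⟨hd0A, hd0x⟩ := (hSmem d0).1 hd0
  have hb0d0 : b0 ≠ d0 := fun h => by rw [h] at hb0x; linarith
  have hMd0 : d0 ≠ M := fun h => by rw [h] at hd0x; exact lt_irrefl _ hd0x
  have hMb0 : b0 ≠ M := fun h => by rw [h] at hb0x; exact lt_irrefl _ hb0x
  have hbd : b0.2 ≠ d0.2 := (hA b0 hb0A d0 hd0A hb0d0).2
  rcases lt_or_gt_of_ne hbd with hlt | hgt
  · -- β < δ : look for pattern B (3142) windmill {a, b, M, d0}
    by_cases hw : ∃ a ∈ P, ∃ b ∈ P, a.1 < b.1 ∧ b.2 < d0.2 ∧ d0.2 < a.2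
    · obtain ⟨a, ha, b, hb, hab, hbd0, hd0a⟩ := hw
      obtain ⟨haA, hax⟩ := (hPmem a).1 ha
      obtain ⟨hbA, hbx⟩ := (hPmem b).1 hb
      have haM : a ≠ M := fun h => by rw [h] at hax; exact lt_irrefl _ hax
      refine ⟨{a, b, M, d0}, ?_, card_four a b M d0 hab hbx hd0x,
        windmill_nodiag a b M d0 hab hbx hd0x
          (Or.inr ⟨hbd0, hd0a, ylt a haA haM⟩), M, by simp, hMA,
        Or.inr (Or.inr (Or.inr (fun q hq => hMmax q hq)))⟩
      intro x hx
      simp only [Finset.mem_insert, Finset.mem_singleton] at hx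
      rcases hx with rfl | rfl | rfl | rfl <;> assumption
    · exfalso; apply hnd
      push_neg at hw
      set A1 : Finset (ℝ × ℝ) := A.filter (fun p => p.2 < d0.2) with hA1def
      have hA1mem : ∀ p, p ∈ A1 ↔ p ∈ A ∧ p.2 < d0.2 := fun p => Finset.mem_filter
      have hA1P : ∀ p ∈ A1, p ∈ P := by
        intro p hp
        obtain ⟨hpA, hpy⟩ := (hA1mem p).1 hp
        rcases xtri p hpA with h | h | h
        · exact (hPmem p).2 ⟨hpA, h⟩
        · subst h; exact absurd hpy (by linarith [ylt d0 hd0A hMd0])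
        · exact absurd hpy (by linarith [hd0min p ((hSmem p).2 ⟨hpA, h⟩)])
      apply hasDiag_bu A A1 (Finset.filter_subset _ _) ⟨b0, (hA1mem b0).2 ⟨hb0A, hlt⟩⟩
        ⟨d0, Finset.mem_sdiff.2 ⟨hd0A, fun h => lt_irrefl _ ((hA1mem d0).1 h).2⟩⟩
      intro p hp q hq
      rw [Finset.mem_sdiff] at hq
      obtain ⟨hqA, hqn⟩ := hq
      obtain ⟨hpA, hpy⟩ := (hA1mem p).1 hp
      have hqy : d0.2 ≤ q.2 := by
        by_contra h
        exact hqn ((hA1mem q).2 ⟨hqA, by linarith⟩)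
      refine ⟨?_, by linarith⟩
      have hpq : p ≠ q := fun h => hqn (h ▸ hp)
      rcases lt_trichotomy p.1 q.1 with h | h | h
      · exact h
      · exact absurd h (hA p hpA q hqA hpq).1
      · exfalso
        have hpP := hA1P p hp
        have hqP : q ∈ P := (hPmem q).2 ⟨hqA, by linarith [((hPmem p).1 hpP).2]⟩
        have hqd0 : q ≠ d0 := fun hh => by rw [hh] at hqP; linarith [((hPmem d0).1 hqP).2]
        have : d0.2 < q.2 := lt_of_le_of_ne hqy (Ne.symm ((hA q hqA d0 hd0A hqd0).2))
        have hh := hw q hqP p hpP h hpy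
        linarith
  · -- δ < β : look for pattern A (2413) windmill {b0, M, c, d}
    by_cases hw : ∃ cc ∈ S, ∃ dd ∈ S, cc.1 < dd.1 ∧ cc.2 < b0.2 ∧ b0.2 < dd.2
    · obtain ⟨cc, hcc, dd, hdd, hcd, hccb, hbdd⟩ := hw
      obtain ⟨hccA, hccx⟩ := (hSmem cc).1 hcc
      obtain ⟨hddA, hddx⟩ := (hSmem dd).1 hdd
      have hddM : dd ≠ M := fun h => by rw [h] at hddx; exact lt_irrefl _ hddx
      refine ⟨{b0, M, cc, dd}, ?_, card_four b0 M cc dd hb0x hccx hcd,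
        windmill_nodiag b0 M cc dd hb0x hccx hcd
          (Or.inl ⟨hccb, hbdd, ylt dd hddA hddM⟩), M, by simp, hMA,
        Or.inr (Or.inr (Or.inr (fun q hq => hMmax q hq)))⟩
      intro x hx
      simp only [Finset.mem_insert, Finset.mem_singleton] at hx
      rcases hx with rfl | rfl | rfl | rfl <;> assumption
    · exfalso; apply hnd
      push_neg at hw
      set A1 : Finset (ℝ × ℝ) := A.filter (fun p => b0.2 ≤ p.2) with hA1def
      have hA1mem : ∀ p, p ∈ A1 ↔ p ∈ A ∧ b0.2 ≤ p.2 := fun p => Finset.mem_filter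
      have hcompl : ∀ q ∈ A \ A1, q ∈ S ∧ q.2 < b0.2 := by
        intro q hq
        rw [Finset.mem_sdiff] at hq
        obtain ⟨hqA, hqn⟩ := hq
        have hqy : q.2 < b0.2 := by
          by_contra h
          exact hqn ((hA1mem q).2 ⟨hqA, by linarith⟩)
        rcases xtri q hqA with h | h | h
        · exact absurd hqy (by linarith [hb0min q ((hPmem q).2 ⟨hqA, h⟩)])
        · subst h; exact absurd hqy (by linarith [ylt b0 hb0A hMb0])
        · exact ⟨(hSmem q).2 ⟨hqA, h⟩, hqy⟩
      apply hasDiag_td A A1 (Finset.filter_subset _ _)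
        ⟨M, (hA1mem M).2 ⟨hMA, hMmax b0 hb0A⟩⟩
        ⟨d0, Finset.mem_sdiff.2 ⟨hd0A, fun h => by linarith [((hA1mem d0).1 h).2]⟩⟩
      intro p hp q hq
      obtain ⟨hqS, hqy⟩ := hcompl q hq
      obtain ⟨hpA, hpy⟩ := (hA1mem p).1 hp
      obtain ⟨hqA, hqx⟩ := (hSmem q).1 hqS
      refine ⟨?_, by linarith⟩
      have hpq : p ≠ q := fun h => by rw [h] at hpy; linarith
      rcases lt_trichotomy p.1 q.1 with h | h | h
      · exact h
      · exact absurd h (hA p hpA q hqA hpq).1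
      · exfalso
        have hpS : p ∈ S := (hSmem p).2 ⟨hpA, by linarith⟩
        have hpb0 : p ≠ b0 := fun hh => by rw [hh] at hpS; linarith [((hSmem b0).1 hpS).2]
        have : b0.2 < p.2 := lt_of_le_of_ne hpy (Ne.symm ((hA p hpA b0 hb0A hpb0).2))
        have hh := hw q hqS p hpS h hqy
        linarith
end

section
/- No finite set A ⊆ ℝ² in general position admits both a bottom-up diagonalization and a top-down diagonalization. -/
/-- `A` admits a bottom-up diagonalization: a partition `{A₁, A₂}` and a witness
point `c` with `A₁` strictly below-left of `c` and `A₂` strictly above-right. -/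
def HasBottomUpDiag (A : Finset (ℝ × ℝ)) : Prop :=
  ∃ A₁ A₂ : Finset (ℝ × ℝ), ∃ c : ℝ × ℝ,
    A₁.Nonempty ∧ A₂.Nonempty ∧ Disjoint A₁ A₂ ∧ A₁ ∪ A₂ = A ∧
    (∀ p ∈ A₁, p.1 < c.1 ∧ p.2 < c.2) ∧ (∀ q ∈ A₂, c.1 < q.1 ∧ c.2 < q.2)

/-- `A` admits a top-down diagonalization: a partition `{A₁, A₂}` and a witness
point `c` with `A₁` strictly above-left of `c` and `A₂` strictly below-right. -/
def HasTopDownDiag (A : Finset (ℝ × ℝ)) : Prop :=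
  ∃ A₁ A₂ : Finset (ℝ × ℝ), ∃ c : ℝ × ℝ,
    A₁.Nonempty ∧ A₂.Nonempty ∧ Disjoint A₁ A₂ ∧ A₁ ∪ A₂ = A ∧
    (∀ p ∈ A₁, p.1 < c.1 ∧ c.2 < p.2) ∧ (∀ q ∈ A₂, c.1 < q.1 ∧ q.2 < c.2)

/-- no finite general-position planar set admits both a bottom-up
and a top-down diagonalization. -/
theorem not_bottomUp_and_topDown (A : Finset (ℝ × ℝ)) (hA : GenPos A) :
    ¬ (HasBottomUpDiag A ∧ HasTopDownDiag A) := by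
  rintro ⟨⟨B₁, B₂, c, hB₁, hB₂, -, hBu, hB₁p, hB₂p⟩,
          ⟨T₁, T₂, d, hT₁, hT₂, -, hTu, hT₁p, hT₂p⟩⟩
  rcases le_total c.1 d.1 with h | h
  · obtain ⟨p, hp⟩ := hB₁
    have hpx := (hB₁p p hp).1
    have hpy := (hB₁p p hp).2
    have hpA : p ∈ T₁ ∪ T₂ := by rw [hTu, ← hBu]; exact Finset.mem_union_left _ hp
    have hpT₁ : p ∈ T₁ := by
      rcases Finset.mem_union.1 hpA with h1 | h2
      · exact h1
      · exact absurd ((hT₂p p h2).1) (by linarith)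
    have hdc : d.2 < c.2 := lt_trans (hT₁p p hpT₁).2 hpy
    obtain ⟨q, hq⟩ := hT₂
    have hqx := (hT₂p q hq).1
    have hqy := (hT₂p q hq).2
    have hqA : q ∈ B₁ ∪ B₂ := by rw [hBu, ← hTu]; exact Finset.mem_union_right _ hq
    have hqB₂ : q ∈ B₂ := by
      rcases Finset.mem_union.1 hqA with h1 | h2
      · exact absurd ((hB₁p q h1).1) (by linarith)
      · exact h2
    linarith [(hB₂p q hqB₂).2]
  · obtain ⟨p, hp⟩ := hT₁
    have hpx := (hT₁p p hp).1
    have hpy := (hT₁p p hp).2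
    have hpA : p ∈ B₁ ∪ B₂ := by rw [hBu, ← hTu]; exact Finset.mem_union_left _ hp
    have hpB₁ : p ∈ B₁ := by
      rcases Finset.mem_union.1 hpA with h1 | h2
      · exact h1
      · exact absurd ((hB₂p p h2).1) (by linarith)
    have hdc : d.2 < c.2 := lt_trans hpy (hB₁p p hpB₁).2
    obtain ⟨q, hq⟩ := hB₂
    have hqx := (hB₂p q hq).1
    have hqy := (hB₂p q hq).2
    have hqA : q ∈ T₁ ∪ T₂ := by rw [hTu, ← hBu]; exact Finset.mem_union_right _ hq
    have hqT₂ : q ∈ T₂ := by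
      rcases Finset.mem_union.1 hqA with h1 | h2
      · exact absurd ((hT₁p q h1).1) (by linarith)
      · exact h2
    linarith [(hT₂p q hqT₂).2]
end

section
/- Let A ⊆ ℝ² be a finite set in general position and let {A₁, A₂} be a bottom-up diagonalization of A (A₁ strictly below and to the left of the witnessing point c, A₂ strictly above and to the right). Then for every box H with H ∩ A₁ ≠ ∅ and H ∩ A₂ ≠ ∅, there exists a box H₁ ⊆ bbox(A₁) containing the top-right corner of bbox(A₁) such that H₁ ∩ A₁ = H ∩ A₁; symmetrically, there exists a box H₂ ⊆ bbox(A₂) containing the bottom-left corner of bbox(A₂) such that H₂ ∩ A₂ = H ∩ A₂. -/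
/-- Bottom-left corner of the smallest enclosing box of a nonempty finite set. -/
def bboxLo (S : Finset (ℝ × ℝ)) (h : S.Nonempty) : ℝ × ℝ :=
  (S.inf' h Prod.fst, S.inf' h Prod.snd)

/-- Top-right corner of the smallest enclosing box of a nonempty finite set;
a box `[a,b] × [c,d]` is `Set.Icc lo hi` in `ℝ × ℝ` with `lo ≤ hi`, and
`bbox S = Set.Icc (bboxLo S h) (bboxHi S h)`. -/
def bboxHi (S : Finset (ℝ × ℝ)) (h : S.Nonempty) : ℝ × ℝ :=
  (S.sup' h Prod.fst, S.sup' h Prod.snd)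

/-- given a bottom-up diagonalization `{A₁, A₂}` of a
general-position set `A` (witnessed by `c`), every box `H` meeting both `A₁` and
`A₂` can be replaced, on the `A₁` side, by a box `H₁ ⊆ bbox A₁` containing the
top-right corner of `bbox A₁` with `H₁ ∩ A₁ = H ∩ A₁`, and symmetrically on the
`A₂` side by a box `H₂ ⊆ bbox A₂` containing the bottom-left corner of `bbox A₂`
with `H₂ ∩ A₂ = H ∩ A₂`. -/
theorem box_restriction_to_corners (A A₁ A₂ : Finset (ℝ × ℝ)) (hA : GenPos A)
    (c : ℝ × ℝ) (h₁ : A₁.Nonempty) (h₂ : A₂.Nonempty)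
    (hdisj : Disjoint A₁ A₂) (hun : A₁ ∪ A₂ = A)
    (hbu₁ : ∀ p ∈ A₁, p.1 < c.1 ∧ p.2 < c.2)
    (hbu₂ : ∀ q ∈ A₂, c.1 < q.1 ∧ c.2 < q.2)
    (lo hi : ℝ × ℝ) (hbox : lo ≤ hi)
    (hH₁ : ((A₁ : Set (ℝ × ℝ)) ∩ Set.Icc lo hi).Nonempty)
    (hH₂ : ((A₂ : Set (ℝ × ℝ)) ∩ Set.Icc lo hi).Nonempty) :
    (∃ lo₁ hi₁ : ℝ × ℝ, lo₁ ≤ hi₁ ∧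
      Set.Icc lo₁ hi₁ ⊆ Set.Icc (bboxLo A₁ h₁) (bboxHi A₁ h₁) ∧
      bboxHi A₁ h₁ ∈ Set.Icc lo₁ hi₁ ∧
      (A₁ : Set (ℝ × ℝ)) ∩ Set.Icc lo₁ hi₁ = (A₁ : Set (ℝ × ℝ)) ∩ Set.Icc lo hi) ∧
    (∃ lo₂ hi₂ : ℝ × ℝ, lo₂ ≤ hi₂ ∧
      Set.Icc lo₂ hi₂ ⊆ Set.Icc (bboxLo A₂ h₂) (bboxHi A₂ h₂) ∧
      bboxLo A₂ h₂ ∈ Set.Icc lo₂ hi₂ ∧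
      (A₂ : Set (ℝ × ℝ)) ∩ Set.Icc lo₂ hi₂ = (A₂ : Set (ℝ × ℝ)) ∩ Set.Icc lo hi) := by
  obtain ⟨p₀, hp₀A, hp₀H⟩ := hH₁
  obtain ⟨q₀, hq₀A, hq₀H⟩ := hH₂
  have hp₀A : p₀ ∈ A₁ := hp₀A
  have hq₀A : q₀ ∈ A₂ := hq₀A
  -- bounds
  have hloA₁ : ∀ p ∈ A₁, bboxLo A₁ h₁ ≤ p := fun p hp =>
    ⟨Finset.inf'_le _ hp, Finset.inf'_le _ hp⟩
  have hhiA₁ : ∀ p ∈ A₁, p ≤ bboxHi A₁ h₁ := fun p hp =>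
    ⟨Finset.le_sup' _ hp, Finset.le_sup' _ hp⟩
  have hloA₂ : ∀ p ∈ A₂, bboxLo A₂ h₂ ≤ p := fun p hp =>
    ⟨Finset.inf'_le _ hp, Finset.inf'_le _ hp⟩
  have hhiA₂ : ∀ p ∈ A₂, p ≤ bboxHi A₂ h₂ := fun p hp =>
    ⟨Finset.le_sup' _ hp, Finset.le_sup' _ hp⟩
  -- every point of A₁ is ≤ hi
  have hA₁hi : ∀ p ∈ A₁, p ≤ hi := by
    intro p hp
    exact ⟨le_of_lt (lt_of_lt_of_le (lt_trans (hbu₁ p hp).1 (hbu₂ q₀ hq₀A).1)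
        hq₀H.2.1),
      le_of_lt (lt_of_lt_of_le (lt_trans (hbu₁ p hp).2 (hbu₂ q₀ hq₀A).2)
        hq₀H.2.2)⟩
  -- every point of A₂ is ≥ lo
  have hA₂lo : ∀ q ∈ A₂, lo ≤ q := by
    intro q hq
    exact ⟨le_of_lt (lt_of_le_of_lt (hp₀H.1.1)
        (lt_trans (hbu₁ p₀ hp₀A).1 (hbu₂ q hq).1)),
      le_of_lt (lt_of_le_of_lt (hp₀H.1.2)
        (lt_trans (hbu₁ p₀ hp₀A).2 (hbu₂ q hq).2))⟩
  constructor
  · refine ⟨lo ⊔ bboxLo A₁ h₁, bboxHi A₁ h₁, ?_, ?_, ?_, ?_⟩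
    · exact sup_le (le_trans hp₀H.1 (hhiA₁ p₀ hp₀A)) ((hloA₁ p₀ hp₀A).trans (hhiA₁ p₀ hp₀A))
    · exact Set.Icc_subset_Icc le_sup_right le_rfl
    · exact ⟨sup_le (le_trans hp₀H.1 (hhiA₁ p₀ hp₀A)) ((hloA₁ p₀ hp₀A).trans (hhiA₁ p₀ hp₀A)), le_rfl⟩
    · ext p
      simp only [Set.mem_inter_iff, Set.mem_Icc, Finset.mem_coe, sup_le_iff, le_sup_iff]
      constructor
      · rintro ⟨hp, ⟨hlo, _⟩, _⟩
        exact ⟨hp, hlo, hA₁hi p hp⟩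
      · rintro ⟨hp, hlo, _⟩
        exact ⟨hp, ⟨hlo, hloA₁ p hp⟩, hhiA₁ p hp⟩
  · refine ⟨bboxLo A₂ h₂, hi ⊓ bboxHi A₂ h₂, ?_, ?_, ?_, ?_⟩
    · exact le_inf (le_trans (hloA₂ q₀ hq₀A) hq₀H.2) ((hloA₂ q₀ hq₀A).trans (hhiA₂ q₀ hq₀A))
    · exact Set.Icc_subset_Icc le_rfl inf_le_right
    · exact ⟨le_rfl, le_inf (le_trans (hloA₂ q₀ hq₀A) hq₀H.2) ((hloA₂ q₀ hq₀A).trans (hhiA₂ q₀ hq₀A))⟩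
    · ext q
      simp only [Set.mem_inter_iff, Set.mem_Icc, Finset.mem_coe, le_inf_iff]
      constructor
      · rintro ⟨hq, _, hhi, _⟩
        exact ⟨hq, hA₂lo q hq, hhi⟩
      · rintro ⟨hq, _, hhi⟩
        exact ⟨hq, hloA₂ q hq, hhi, hhiA₂ q hq⟩
end

section
/- Let A ⊆ ℝ² be a finite set in general position with a bottom-up diagonalization {A₁, A₂} (A₁ strictly below-left, A₂ strictly above-right of the witnessing point), and let f be a monotone decomposable score function on subsets of A with composition function g. Then Opt(A) = max( Opt(A₁), Opt(A₂), g(OptTR(A₁), OptBL(A₂)) ). -/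
open scoped Classical in
/-- The set of points of `S` lying in the box `Set.Icc lo hi`. -/
noncomputable def boxInt (S : Finset (ℝ × ℝ)) (lo hi : ℝ × ℝ) : Finset (ℝ × ℝ) :=
  S.filter (fun p => p ∈ Set.Icc lo hi)

/-- `Opt f S` : the maximum of `f (H ∩ S)` over all boxes `H` (the supremum is
attained since `f (H ∩ S)` takes finitely many values). -/
noncomputable def Opt (f : Finset (ℝ × ℝ) → ℝ) (S : Finset (ℝ × ℝ)) : ℝ :=
  sSup {x : ℝ | ∃ lo hi : ℝ × ℝ, lo ≤ hi ∧ x = f (boxInt S lo hi)}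

/-- `OptTR f S h` : the maximum of `f (H ∩ S)` over boxes `H ⊆ bbox S`
containing the top-right corner of `bbox S`. -/
noncomputable def OptTR (f : Finset (ℝ × ℝ) → ℝ) (S : Finset (ℝ × ℝ))
    (h : S.Nonempty) : ℝ :=
  sSup {x : ℝ | ∃ lo hi : ℝ × ℝ, lo ≤ hi ∧
    Set.Icc lo hi ⊆ Set.Icc (bboxLo S h) (bboxHi S h) ∧
    bboxHi S h ∈ Set.Icc lo hi ∧ x = f (boxInt S lo hi)}

/-- `OptBL f S h` : the maximum of `f (H ∩ S)` over boxes `H ⊆ bbox S`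
containing the bottom-left corner of `bbox S`. -/
noncomputable def OptBL (f : Finset (ℝ × ℝ) → ℝ) (S : Finset (ℝ × ℝ))
    (h : S.Nonempty) : ℝ :=
  sSup {x : ℝ | ∃ lo hi : ℝ × ℝ, lo ≤ hi ∧
    Set.Icc lo hi ⊆ Set.Icc (bboxLo S h) (bboxHi S h) ∧
    bboxLo S h ∈ Set.Icc lo hi ∧ x = f (boxInt S lo hi)}


section Helpers

lemma mem_boxInt {S : Finset (ℝ × ℝ)} {lo hi p : ℝ × ℝ} :
    p ∈ boxInt S lo hi ↔ p ∈ S ∧ lo ≤ p ∧ p ≤ hi := by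
  classical
  simp [boxInt, Set.mem_Icc, and_assoc]

lemma boxInt_subset (S : Finset (ℝ × ℝ)) (lo hi : ℝ × ℝ) : boxInt S lo hi ⊆ S :=
  fun _ hp => (mem_boxInt.mp hp).1

lemma optSet_finite (f : Finset (ℝ × ℝ) → ℝ) (S : Finset (ℝ × ℝ)) :
    {x : ℝ | ∃ lo hi : ℝ × ℝ, lo ≤ hi ∧ x = f (boxInt S lo hi)}.Finite := by
  classical
  apply (S.powerset.image f).finite_toSet.subset
  rintro x ⟨lo, hi, -, rfl⟩
  simp only [Finset.coe_image, Set.mem_image, Finset.mem_coe, Finset.mem_powerset]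
  exact ⟨_, Finset.filter_subset _ _, rfl⟩

lemma optSet_nonempty (f : Finset (ℝ × ℝ) → ℝ) (S : Finset (ℝ × ℝ)) :
    {x : ℝ | ∃ lo hi : ℝ × ℝ, lo ≤ hi ∧ x = f (boxInt S lo hi)}.Nonempty :=
  ⟨f (boxInt S 0 0), 0, 0, le_rfl, rfl⟩

lemma le_opt (f : Finset (ℝ × ℝ) → ℝ) (S : Finset (ℝ × ℝ)) {lo hi : ℝ × ℝ}
    (h : lo ≤ hi) : f (boxInt S lo hi) ≤ Opt f S :=
  le_csSup (optSet_finite f S).bddAbove ⟨lo, hi, h, rfl⟩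

lemma exists_opt (f : Finset (ℝ × ℝ) → ℝ) (S : Finset (ℝ × ℝ)) :
    ∃ lo hi : ℝ × ℝ, lo ≤ hi ∧ Opt f S = f (boxInt S lo hi) :=
  (optSet_nonempty f S).csSup_mem (optSet_finite f S)

lemma trSet_subset (f : Finset (ℝ × ℝ) → ℝ) (S : Finset (ℝ × ℝ)) (h : S.Nonempty) :
    {x : ℝ | ∃ lo hi : ℝ × ℝ, lo ≤ hi ∧
      Set.Icc lo hi ⊆ Set.Icc (bboxLo S h) (bboxHi S h) ∧
      bboxHi S h ∈ Set.Icc lo hi ∧ x = f (boxInt S lo hi)} ⊆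
    {x : ℝ | ∃ lo hi : ℝ × ℝ, lo ≤ hi ∧ x = f (boxInt S lo hi)} := by
  rintro x ⟨lo, hi, h1, -, -, rfl⟩; exact ⟨lo, hi, h1, rfl⟩

lemma blSet_subset (f : Finset (ℝ × ℝ) → ℝ) (S : Finset (ℝ × ℝ)) (h : S.Nonempty) :
    {x : ℝ | ∃ lo hi : ℝ × ℝ, lo ≤ hi ∧
      Set.Icc lo hi ⊆ Set.Icc (bboxLo S h) (bboxHi S h) ∧
      bboxLo S h ∈ Set.Icc lo hi ∧ x = f (boxInt S lo hi)} ⊆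
    {x : ℝ | ∃ lo hi : ℝ × ℝ, lo ≤ hi ∧ x = f (boxInt S lo hi)} := by
  rintro x ⟨lo, hi, h1, -, -, rfl⟩; exact ⟨lo, hi, h1, rfl⟩

lemma bboxLo_le {S : Finset (ℝ × ℝ)} {h : S.Nonempty} {p : ℝ × ℝ} (hp : p ∈ S) :
    bboxLo S h ≤ p :=
  ⟨Finset.inf'_le _ hp, Finset.inf'_le _ hp⟩

lemma le_bboxHi {S : Finset (ℝ × ℝ)} {h : S.Nonempty} {p : ℝ × ℝ} (hp : p ∈ S) :
    p ≤ bboxHi S h :=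
  ⟨Finset.le_sup' _ hp, Finset.le_sup' _ hp⟩

lemma bboxLo_le_bboxHi {S : Finset (ℝ × ℝ)} (h : S.Nonempty) :
    bboxLo S h ≤ bboxHi S h :=
  (bboxLo_le h.choose_spec).trans (le_bboxHi h.choose_spec)

lemma le_optTR (f : Finset (ℝ × ℝ) → ℝ) (S : Finset (ℝ × ℝ)) (h : S.Nonempty)
    {lo hi : ℝ × ℝ} (h1 : lo ≤ hi)
    (h2 : Set.Icc lo hi ⊆ Set.Icc (bboxLo S h) (bboxHi S h))
    (h3 : bboxHi S h ∈ Set.Icc lo hi) :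
    f (boxInt S lo hi) ≤ OptTR f S h :=
  le_csSup (((optSet_finite f S).subset (trSet_subset f S h)).bddAbove)
    ⟨lo, hi, h1, h2, h3, rfl⟩

lemma exists_optTR (f : Finset (ℝ × ℝ) → ℝ) (S : Finset (ℝ × ℝ)) (h : S.Nonempty) :
    ∃ lo hi : ℝ × ℝ, lo ≤ hi ∧
      Set.Icc lo hi ⊆ Set.Icc (bboxLo S h) (bboxHi S h) ∧
      bboxHi S h ∈ Set.Icc lo hi ∧ OptTR f S h = f (boxInt S lo hi) := by
  have hne : bboxLo S h ≤ bboxHi S h := bboxLo_le_bboxHi h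
  refine Set.Nonempty.csSup_mem ?_ ((optSet_finite f S).subset (trSet_subset f S h))
  exact ⟨_, bboxLo S h, bboxHi S h, hne, subset_rfl, ⟨hne, le_rfl⟩, rfl⟩

lemma le_optBL (f : Finset (ℝ × ℝ) → ℝ) (S : Finset (ℝ × ℝ)) (h : S.Nonempty)
    {lo hi : ℝ × ℝ} (h1 : lo ≤ hi)
    (h2 : Set.Icc lo hi ⊆ Set.Icc (bboxLo S h) (bboxHi S h))
    (h3 : bboxLo S h ∈ Set.Icc lo hi) :
    f (boxInt S lo hi) ≤ OptBL f S h :=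
  le_csSup (((optSet_finite f S).subset (blSet_subset f S h)).bddAbove)
    ⟨lo, hi, h1, h2, h3, rfl⟩

lemma exists_optBL (f : Finset (ℝ × ℝ) → ℝ) (S : Finset (ℝ × ℝ)) (h : S.Nonempty) :
    ∃ lo hi : ℝ × ℝ, lo ≤ hi ∧
      Set.Icc lo hi ⊆ Set.Icc (bboxLo S h) (bboxHi S h) ∧
      bboxLo S h ∈ Set.Icc lo hi ∧ OptBL f S h = f (boxInt S lo hi) := by
  have hne : bboxLo S h ≤ bboxHi S h := bboxLo_le_bboxHi h
  refine Set.Nonempty.csSup_mem ?_ ((optSet_finite f S).subset (blSet_subset f S h))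
  exact ⟨_, bboxLo S h, bboxHi S h, hne, subset_rfl, ⟨le_rfl, hne⟩, rfl⟩

end Helpers
/-- for a bottom-up diagonalization `{A₁, A₂}` of a
general-position set `A` and a monotone decomposable score function `f` with
composition `g`, `Opt A = max (Opt A₁) (Opt A₂) (g (OptTR A₁) (OptBL A₂))`. -/
theorem opt_of_bottomUp_diag (A A₁ A₂ : Finset (ℝ × ℝ)) (hA : GenPos A)
    (c : ℝ × ℝ) (h₁ : A₁.Nonempty) (h₂ : A₂.Nonempty)
    (hdisj : Disjoint A₁ A₂) (hun : A₁ ∪ A₂ = A)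
    (hbu₁ : ∀ p ∈ A₁, p.1 < c.1 ∧ p.2 < c.2)
    (hbu₂ : ∀ q ∈ A₂, c.1 < q.1 ∧ c.2 < q.2)
    (f : Finset (ℝ × ℝ) → ℝ) (g : ℝ → ℝ → ℝ)
    (hdec : ∀ B ⊆ A, ∀ B₁ B₂ : Finset (ℝ × ℝ), Disjoint B₁ B₂ → B₁ ∪ B₂ = B →
      f B = g (f B₁) (f B₂))
    (hg₁ : ∀ y : ℝ, Monotone (fun x => g x y))
    (hg₂ : ∀ x : ℝ, Monotone (g x)) :
    Opt f A = max (max (Opt f A₁) (Opt f A₂))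
      (g (OptTR f A₁ h₁) (OptBL f A₂ h₂)) := by
  classical
  -- basic componentwise facts
  have hHi₁c : (bboxHi A₁ h₁).1 < c.1 ∧ (bboxHi A₁ h₁).2 < c.2 :=
    ⟨(Finset.sup'_lt_iff h₁).mpr fun p hp => (hbu₁ p hp).1,
     (Finset.sup'_lt_iff h₁).mpr fun p hp => (hbu₁ p hp).2⟩
  have hcLo₂ : c.1 < (bboxLo A₂ h₂).1 ∧ c.2 < (bboxLo A₂ h₂).2 :=
    ⟨(Finset.lt_inf'_iff h₂).mpr fun p hp => (hbu₂ p hp).1,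
     (Finset.lt_inf'_iff h₂).mpr fun p hp => (hbu₂ p hp).2⟩
  -- the degenerate box at c meets nothing
  have hAcc : boxInt A c c = ∅ := by
    ext p
    simp only [mem_boxInt, Finset.notMem_empty, iff_false, not_and]
    intro hp hlp hph
    rw [← hun] at hp
    rcases Finset.mem_union.mp hp with h | h
    · exact absurd hlp.1 (not_le.mpr (hbu₁ p h).1)
    · exact absurd hph.1 (not_le.mpr (hbu₂ p h).1)
  apply le_antisymm
  · -- Opt A ≤ RHS
    obtain ⟨lo, hi, hle, heq⟩ := exists_opt f A
    rw [heq]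
    set B₁ := boxInt A₁ lo hi with hB₁def
    set B₂ := boxInt A₂ lo hi with hB₂def
    have hU : B₁ ∪ B₂ = boxInt A lo hi := by
      ext p
      simp only [hB₁def, hB₂def, Finset.mem_union, mem_boxInt, ← hun]
      tauto
    have hD : Disjoint B₁ B₂ :=
      hdisj.mono (boxInt_subset _ _ _) (boxInt_subset _ _ _)
    have hfB : f (boxInt A lo hi) = g (f B₁) (f B₂) :=
      hdec _ (boxInt_subset _ _ _) _ _ hD hU
    rcases B₁.eq_empty_or_nonempty with hB₁ | hB₁
    · have hEq : boxInt A lo hi = B₂ := by rw [← hU, hB₁, Finset.empty_union]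
      rw [hEq]
      exact le_trans (le_opt f A₂ hle) (le_max_of_le_left (le_max_right _ _))
    · rcases B₂.eq_empty_or_nonempty with hB₂ | hB₂
      · have hEq : boxInt A lo hi = B₁ := by rw [← hU, hB₂, Finset.union_empty]
        rw [hEq]
        exact le_trans (le_opt f A₁ hle) (le_max_of_le_left (le_max_left _ _))
      · obtain ⟨p₀, hp₀⟩ := hB₁
        obtain ⟨q₀, hq₀⟩ := hB₂
        obtain ⟨hp₀A, hp₀l, hp₀h⟩ := mem_boxInt.mp hp₀
        obtain ⟨hq₀A, hq₀l, hq₀h⟩ := mem_boxInt.mp hq₀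
        have hc_hi : c.1 < hi.1 ∧ c.2 < hi.2 :=
          ⟨lt_of_lt_of_le (hbu₂ _ hq₀A).1 hq₀h.1, lt_of_lt_of_le (hbu₂ _ hq₀A).2 hq₀h.2⟩
        have hlo_c : lo.1 < c.1 ∧ lo.2 < c.2 :=
          ⟨lt_of_le_of_lt hp₀l.1 (hbu₁ _ hp₀A).1, lt_of_le_of_lt hp₀l.2 (hbu₁ _ hp₀A).2⟩
        have hTR : f B₁ ≤ OptTR f A₁ h₁ := by
          have hEq : boxInt A₁ (max lo.1 (bboxLo A₁ h₁).1, max lo.2 (bboxLo A₁ h₁).2)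
              (bboxHi A₁ h₁) = B₁ := by
            ext p
            simp only [hB₁def, mem_boxInt]
            constructor
            · rintro ⟨hp, hl, hh⟩
              refine ⟨hp, ⟨le_trans (le_max_left _ _) hl.1,
                le_trans (le_max_left _ _) hl.2⟩,
                le_of_lt (lt_trans (hbu₁ p hp).1 hc_hi.1),
                le_of_lt (lt_trans (hbu₁ p hp).2 hc_hi.2)⟩
            · rintro ⟨hp, hl, hh⟩
              exact ⟨hp, ⟨max_le hl.1 (bboxLo_le hp).1, max_le hl.2 (bboxLo_le hp).2⟩,
                le_bboxHi hp⟩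
          have hle' : ((max lo.1 (bboxLo A₁ h₁).1, max lo.2 (bboxLo A₁ h₁).2) : ℝ × ℝ)
              ≤ bboxHi A₁ h₁ :=
            ⟨max_le (le_trans hp₀l.1 (le_bboxHi hp₀A).1) (bboxLo_le_bboxHi h₁).1,
             max_le (le_trans hp₀l.2 (le_bboxHi hp₀A).2) (bboxLo_le_bboxHi h₁).2⟩
          rw [← hEq]
          exact le_optTR f A₁ h₁ hle'
            (Set.Icc_subset_Icc ⟨le_max_right _ _, le_max_right _ _⟩ le_rfl)
            ⟨hle', le_rfl⟩
        have hBL : f B₂ ≤ OptBL f A₂ h₂ := by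
          have hEq : boxInt A₂ (bboxLo A₂ h₂)
              (min hi.1 (bboxHi A₂ h₂).1, min hi.2 (bboxHi A₂ h₂).2) = B₂ := by
            ext p
            simp only [hB₂def, mem_boxInt]
            constructor
            · rintro ⟨hp, hl, hh⟩
              refine ⟨hp, ⟨le_of_lt (lt_trans hlo_c.1 (hbu₂ p hp).1),
                le_of_lt (lt_trans hlo_c.2 (hbu₂ p hp).2)⟩,
                le_trans hh.1 (min_le_left _ _), le_trans hh.2 (min_le_left _ _)⟩
            · rintro ⟨hp, hl, hh⟩
              exact ⟨hp, bboxLo_le hp,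
                ⟨le_min hh.1 (le_bboxHi hp).1, le_min hh.2 (le_bboxHi hp).2⟩⟩
          have hle' : bboxLo A₂ h₂ ≤
              ((min hi.1 (bboxHi A₂ h₂).1, min hi.2 (bboxHi A₂ h₂).2) : ℝ × ℝ) :=
            ⟨le_min (le_trans (bboxLo_le hq₀A).1 hq₀h.1) (bboxLo_le_bboxHi h₂).1,
             le_min (le_trans (bboxLo_le hq₀A).2 hq₀h.2) (bboxLo_le_bboxHi h₂).2⟩
          rw [← hEq]
          exact le_optBL f A₂ h₂ hle'
            (Set.Icc_subset_Icc le_rfl ⟨min_le_right _ _, min_le_right _ _⟩)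
            ⟨le_rfl, hle'⟩
        rw [hfB]
        exact le_trans (le_trans (hg₁ (f B₂) hTR) (hg₂ _ hBL)) (le_max_right _ _)
  · -- RHS ≤ Opt A
    refine max_le (max_le ?_ ?_) ?_
    · -- Opt A₁ ≤ Opt A
      obtain ⟨lo, hi, hle, heq⟩ := exists_opt f A₁
      rw [heq]
      by_cases hcase : lo ≤ ((min hi.1 c.1, min hi.2 c.2) : ℝ × ℝ)
      · have hEq : boxInt A lo (min hi.1 c.1, min hi.2 c.2) = boxInt A₁ lo hi := by
          ext p
          simp only [mem_boxInt]
          constructor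
          · rintro ⟨hp, hl, hh⟩
            rw [← hun] at hp
            rcases Finset.mem_union.mp hp with h | h
            · exact ⟨h, hl, le_trans hh.1 (min_le_left _ _),
                le_trans hh.2 (min_le_left _ _)⟩
            · exact absurd (le_trans hh.1 (min_le_right _ _))
                (not_le.mpr (hbu₂ p h).1)
          · rintro ⟨hp, hl, hh⟩
            exact ⟨hun ▸ Finset.mem_union_left _ hp, hl,
              ⟨le_min hh.1 (le_of_lt (hbu₁ p hp).1),
               le_min hh.2 (le_of_lt (hbu₁ p hp).2)⟩⟩
        rw [← hEq]
        exact le_opt f A hcase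
      · have hempty : boxInt A₁ lo hi = ∅ := by
          ext p
          simp only [mem_boxInt, Finset.notMem_empty, iff_false, not_and]
          intro hp hl hh
          exact hcase ⟨le_trans hl.1 (le_min hh.1 (le_of_lt (hbu₁ p hp).1)),
            le_trans hl.2 (le_min hh.2 (le_of_lt (hbu₁ p hp).2))⟩
        rw [hempty, ← hAcc]
        exact le_opt f A le_rfl
    · -- Opt A₂ ≤ Opt A
      obtain ⟨lo, hi, hle, heq⟩ := exists_opt f A₂
      rw [heq]
      by_cases hcase : ((max lo.1 c.1, max lo.2 c.2) : ℝ × ℝ) ≤ hi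
      · have hEq : boxInt A (max lo.1 c.1, max lo.2 c.2) hi = boxInt A₂ lo hi := by
          ext p
          simp only [mem_boxInt]
          constructor
          · rintro ⟨hp, hl, hh⟩
            rw [← hun] at hp
            rcases Finset.mem_union.mp hp with h | h
            · exact absurd (le_trans (le_max_right _ _) hl.1)
                (not_le.mpr (hbu₁ p h).1)
            · exact ⟨h, ⟨le_trans (le_max_left _ _) hl.1,
                le_trans (le_max_left _ _) hl.2⟩, hh⟩
          · rintro ⟨hp, hl, hh⟩
            exact ⟨hun ▸ Finset.mem_union_right _ hp,
              ⟨max_le hl.1 (le_of_lt (hbu₂ p hp).1),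
               max_le hl.2 (le_of_lt (hbu₂ p hp).2)⟩, hh⟩
        rw [← hEq]
        exact le_opt f A hcase
      · have hempty : boxInt A₂ lo hi = ∅ := by
          ext p
          simp only [mem_boxInt, Finset.notMem_empty, iff_false, not_and]
          intro hp hl hh
          exact hcase ⟨le_trans (max_le hl.1 (le_of_lt (hbu₂ p hp).1)) hh.1,
            le_trans (max_le hl.2 (le_of_lt (hbu₂ p hp).2)) hh.2⟩
        rw [hempty, ← hAcc]
        exact le_opt f A le_rfl
    · -- g (OptTR A₁) (OptBL A₂) ≤ Opt A
      obtain ⟨lo₁, hi₁, hle₁, hsub₁, hmem₁, heq₁⟩ := exists_optTR f A₁ h₁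
      obtain ⟨lo₂, hi₂, hle₂, hsub₂, hmem₂, heq₂⟩ := exists_optBL f A₂ h₂
      have hkey : lo₁ ≤ hi₂ :=
        ⟨le_of_lt (lt_of_le_of_lt hmem₁.1.1
          (lt_trans hHi₁c.1 (lt_of_lt_of_le hcLo₂.1 hmem₂.2.1))),
         le_of_lt (lt_of_le_of_lt hmem₁.1.2
          (lt_trans hHi₁c.2 (lt_of_lt_of_le hcLo₂.2 hmem₂.2.2)))⟩
      have hunion : boxInt A₁ lo₁ hi₁ ∪ boxInt A₂ lo₂ hi₂ = boxInt A lo₁ hi₂ := by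
        ext p
        simp only [Finset.mem_union, mem_boxInt]
        constructor
        · rintro (⟨hp, hl, hh⟩ | ⟨hp, hl, hh⟩)
          · exact ⟨hun ▸ Finset.mem_union_left _ hp, hl,
              ⟨le_of_lt (lt_trans (hbu₁ p hp).1 (lt_of_lt_of_le hcLo₂.1 hmem₂.2.1)),
               le_of_lt (lt_trans (hbu₁ p hp).2 (lt_of_lt_of_le hcLo₂.2 hmem₂.2.2))⟩⟩
          · exact ⟨hun ▸ Finset.mem_union_right _ hp,
              ⟨le_of_lt (lt_of_le_of_lt hmem₁.1.1 (lt_trans hHi₁c.1 (hbu₂ p hp).1)),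
               le_of_lt (lt_of_le_of_lt hmem₁.1.2 (lt_trans hHi₁c.2 (hbu₂ p hp).2))⟩,
              hh⟩
        · rintro ⟨hp, hl, hh⟩
          rw [← hun] at hp
          rcases Finset.mem_union.mp hp with h | h
          · exact Or.inl ⟨h, hl, le_trans (le_bboxHi h) hmem₁.2⟩
          · exact Or.inr ⟨h, le_trans hmem₂.1 (bboxLo_le h), hh⟩
      have hD : Disjoint (boxInt A₁ lo₁ hi₁) (boxInt A₂ lo₂ hi₂) :=
        hdisj.mono (boxInt_subset _ _ _) (boxInt_subset _ _ _)
      have hfB : f (boxInt A lo₁ hi₂) = g (f (boxInt A₁ lo₁ hi₁)) (f (boxInt A₂ lo₂ hi₂)) :=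
        hdec _ (boxInt_subset _ _ _) _ _ hD hunion
      rw [heq₁, heq₂, ← hfB]
      exact le_opt f A hkey
end

section
/- Let A ⊆ ℝ² be a finite set in general position with a bottom-up diagonalization {A₁, A₂} (A₁ strictly below-left, A₂ strictly above-right of the witnessing point), and let f be a monotone decomposable score function on subsets of A with composition function g. Then OptBLbox(A) = max( OptBL(A₁), g(f(A₁), OptBL(A₂)) ), where OptBLbox(A) denotes the maximum of f(H ∩ A) over all boxes H ⊆ bbox(A) containing the bottom-left corner of bbox(A). -/
lemma finite_boxSet (f : Finset (ℝ × ℝ) → ℝ) (S : Finset (ℝ × ℝ)) (T : Set ℝ)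
    (hT : ∀ x ∈ T, ∃ lo hi : ℝ × ℝ, x = f (boxInt S lo hi)) : T.Finite := by
  refine Set.Finite.subset (S.powerset.image f).finite_toSet ?_
  intro x hx
  obtain ⟨lo, hi, rfl⟩ := hT x hx
  simp only [Finset.coe_image, Set.mem_image, Finset.mem_coe, Finset.mem_powerset]
  exact ⟨boxInt S lo hi, Finset.filter_subset _ _, rfl⟩

lemma bddAbove_boxSet (f : Finset (ℝ × ℝ) → ℝ) (S : Finset (ℝ × ℝ)) (T : Set ℝ)
    (hT : ∀ x ∈ T, ∃ lo hi : ℝ × ℝ, x = f (boxInt S lo hi)) : BddAbove T :=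
  (finite_boxSet f S T hT).bddAbove

lemma lo_le_mem {S : Finset (ℝ × ℝ)} (hS : S.Nonempty) {p : ℝ × ℝ} (hp : p ∈ S) :
    bboxLo S hS ≤ p :=
  ⟨Finset.inf'_le _ hp, Finset.inf'_le _ hp⟩

lemma mem_le_hi {S : Finset (ℝ × ℝ)} (hS : S.Nonempty) {p : ℝ × ℝ} (hp : p ∈ S) :
    p ≤ bboxHi S hS :=
  ⟨Finset.le_sup' _ hp, Finset.le_sup' _ hp⟩

lemma boxInt_lo_irrel {S : Finset (ℝ × ℝ)} (hS : S.Nonempty) {lo lo' : ℝ × ℝ} (hi : ℝ × ℝ)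
    (h : lo ≤ bboxLo S hS) (h' : lo' ≤ bboxLo S hS) :
    boxInt S lo hi = boxInt S lo' hi := by
  ext p
  simp only [mem_boxInt]
  constructor
  · rintro ⟨hp, -, h2⟩; exact ⟨hp, h'.trans (lo_le_mem hS hp), h2⟩
  · rintro ⟨hp, -, h2⟩; exact ⟨hp, h.trans (lo_le_mem hS hp), h2⟩

lemma boxInt_hi_inf {S : Finset (ℝ × ℝ)} (hS : S.Nonempty) (lo hi : ℝ × ℝ) :
    boxInt S lo (hi ⊓ bboxHi S hS) = boxInt S lo hi := by
  ext p
  simp only [mem_boxInt, le_inf_iff]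
  constructor
  · rintro ⟨hp, h1, h2, -⟩; exact ⟨hp, h1, h2⟩
  · rintro ⟨hp, h1, h2⟩; exact ⟨hp, h1, h2, mem_le_hi hS hp⟩

/-- for a bottom-up diagonalization `{A₁, A₂}` of a
general-position set `A` and a monotone decomposable score function `f` with
composition `g`, the maximum of `f (H ∩ A)` over boxes `H ⊆ bbox A` containing
the bottom-left corner of `bbox A` equals
`max (OptBL A₁) (g (f A₁) (OptBL A₂))`. -/
theorem optBL_of_bottomUp_diag (A A₁ A₂ : Finset (ℝ × ℝ)) (hA : GenPos A)
    (hAne : A.Nonempty) (c : ℝ × ℝ) (h₁ : A₁.Nonempty) (h₂ : A₂.Nonempty)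
    (hdisj : Disjoint A₁ A₂) (hun : A₁ ∪ A₂ = A)
    (hbu₁ : ∀ p ∈ A₁, p.1 < c.1 ∧ p.2 < c.2)
    (hbu₂ : ∀ q ∈ A₂, c.1 < q.1 ∧ c.2 < q.2)
    (f : Finset (ℝ × ℝ) → ℝ) (g : ℝ → ℝ → ℝ)
    (hdec : ∀ B ⊆ A, ∀ B₁ B₂ : Finset (ℝ × ℝ), Disjoint B₁ B₂ → B₁ ∪ B₂ = B →
      f B = g (f B₁) (f B₂))
    (hg₁ : ∀ y : ℝ, Monotone (fun x => g x y))
    (hg₂ : ∀ x : ℝ, Monotone (g x)) :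
    OptBL f A hAne = max (OptBL f A₁ h₁) (g (f A₁) (OptBL f A₂ h₂)) := by
  classical
  have hsub₁ : A₁ ⊆ A := by rw [← hun]; exact Finset.subset_union_left
  have hsub₂ : A₂ ⊆ A := by rw [← hun]; exact Finset.subset_union_right
  -- strict coordinate facts
  have ha₁c : (bboxLo A₁ h₁).1 < c.1 ∧ (bboxLo A₁ h₁).2 < c.2 := by
    obtain ⟨p, hp⟩ := h₁
    exact ⟨lt_of_le_of_lt (Finset.inf'_le _ hp) (hbu₁ p hp).1,
      lt_of_le_of_lt (Finset.inf'_le _ hp) (hbu₁ p hp).2⟩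
  have hb₁c : (bboxHi A₁ h₁).1 < c.1 ∧ (bboxHi A₁ h₁).2 < c.2 :=
    ⟨(Finset.sup'_lt_iff h₁).2 fun p hp => (hbu₁ p hp).1,
     (Finset.sup'_lt_iff h₁).2 fun p hp => (hbu₁ p hp).2⟩
  have hca₂ : c.1 < (bboxLo A₂ h₂).1 ∧ c.2 < (bboxLo A₂ h₂).2 :=
    ⟨(Finset.lt_inf'_iff h₂).2 fun q hq => (hbu₂ q hq).1,
     (Finset.lt_inf'_iff h₂).2 fun q hq => (hbu₂ q hq).2⟩
  have hcb₂ : c.1 < (bboxHi A₂ h₂).1 ∧ c.2 < (bboxHi A₂ h₂).2 := by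
    obtain ⟨q, hq⟩ := h₂
    exact ⟨lt_of_lt_of_le (hbu₂ q hq).1 (Finset.le_sup' _ hq),
      lt_of_lt_of_le (hbu₂ q hq).2 (Finset.le_sup' _ hq)⟩
  have ha₁a₂ : bboxLo A₁ h₁ ≤ bboxLo A₂ h₂ :=
    ⟨le_of_lt (lt_trans ha₁c.1 hca₂.1), le_of_lt (lt_trans ha₁c.2 hca₂.2)⟩
  have hb₁b₂ : bboxHi A₁ h₁ ≤ bboxHi A₂ h₂ :=
    ⟨le_of_lt (lt_trans hb₁c.1 hcb₂.1), le_of_lt (lt_trans hb₁c.2 hcb₂.2)⟩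
  -- bbox identifications
  have haeq : bboxLo A hAne = bboxLo A₁ h₁ := by
    have hf : ∀ (π : ℝ × ℝ → ℝ), (∀ q ∈ A₂, A₁.inf' h₁ π < π q) →
        A.inf' hAne π = A₁.inf' h₁ π := by
      intro π hπ
      apply le_antisymm
      · obtain ⟨p, hp, hpe⟩ := Finset.exists_mem_eq_inf' h₁ π
        rw [hpe]; exact Finset.inf'_le _ (hsub₁ hp)
      · obtain ⟨p, hp, hpe⟩ := Finset.exists_mem_eq_inf' hAne π
        rw [hpe]
        have hp' : p ∈ A₁ ∪ A₂ := by rw [hun]; exact hp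
        rcases Finset.mem_union.1 hp' with h | h
        · exact Finset.inf'_le _ h
        · exact le_of_lt (hπ p h)
    exact Prod.ext (hf Prod.fst fun q hq => lt_trans ha₁c.1 (hbu₂ q hq).1)
        (hf Prod.snd fun q hq => lt_trans ha₁c.2 (hbu₂ q hq).2)
  have hbeq : bboxHi A hAne = bboxHi A₂ h₂ := by
    have hf : ∀ (π : ℝ × ℝ → ℝ), (∀ p ∈ A₁, π p < A₂.sup' h₂ π) →
        A.sup' hAne π = A₂.sup' h₂ π := by
      intro π hπ
      apply le_antisymm
      · obtain ⟨p, hp, hpe⟩ := Finset.exists_mem_eq_sup' hAne π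
        rw [hpe]
        have hp' : p ∈ A₁ ∪ A₂ := by rw [hun]; exact hp
        rcases Finset.mem_union.1 hp' with h | h
        · exact le_of_lt (hπ p h)
        · exact Finset.le_sup' _ h
      · obtain ⟨q, hq, hqe⟩ := Finset.exists_mem_eq_sup' h₂ π
        rw [hqe]; exact Finset.le_sup' _ (hsub₂ hq)
    exact Prod.ext (hf Prod.fst fun p hp => lt_trans (hbu₁ p hp).1 hcb₂.1)
      (hf Prod.snd fun p hp => lt_trans (hbu₁ p hp).2 hcb₂.2)
  have hab : bboxLo A hAne ≤ bboxHi A hAne :=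
    (lo_le_mem hAne hAne.choose_spec).trans (mem_le_hi hAne hAne.choose_spec)
  have hab₁ : bboxLo A₁ h₁ ≤ bboxHi A₁ h₁ :=
    (lo_le_mem h₁ h₁.choose_spec).trans (mem_le_hi h₁ h₁.choose_spec)
  have hab₂ : bboxLo A₂ h₂ ≤ bboxHi A₂ h₂ :=
    (lo_le_mem h₂ h₂.choose_spec).trans (mem_le_hi h₂ h₂.choose_spec)
  -- the three optimization sets
  set SA : Set ℝ := {x : ℝ | ∃ lo hi : ℝ × ℝ, lo ≤ hi ∧
    Set.Icc lo hi ⊆ Set.Icc (bboxLo A hAne) (bboxHi A hAne) ∧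
    bboxLo A hAne ∈ Set.Icc lo hi ∧ x = f (boxInt A lo hi)} with hSAdef
  set S1 : Set ℝ := {x : ℝ | ∃ lo hi : ℝ × ℝ, lo ≤ hi ∧
    Set.Icc lo hi ⊆ Set.Icc (bboxLo A₁ h₁) (bboxHi A₁ h₁) ∧
    bboxLo A₁ h₁ ∈ Set.Icc lo hi ∧ x = f (boxInt A₁ lo hi)} with hS1def
  set S2 : Set ℝ := {x : ℝ | ∃ lo hi : ℝ × ℝ, lo ≤ hi ∧
    Set.Icc lo hi ⊆ Set.Icc (bboxLo A₂ h₂) (bboxHi A₂ h₂) ∧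
    bboxLo A₂ h₂ ∈ Set.Icc lo hi ∧ x = f (boxInt A₂ lo hi)} with hS2def
  have hOA : OptBL f A hAne = sSup SA := rfl
  have hO1 : OptBL f A₁ h₁ = sSup S1 := rfl
  have hO2 : OptBL f A₂ h₂ = sSup S2 := rfl
  have hbddA : BddAbove SA :=
    bddAbove_boxSet f A SA fun x hx => by
      obtain ⟨lo, hi, _, _, _, hx⟩ := hx; exact ⟨lo, hi, hx⟩
  have hbdd1 : BddAbove S1 :=
    bddAbove_boxSet f A₁ S1 fun x hx => by
      obtain ⟨lo, hi, _, _, _, hx⟩ := hx; exact ⟨lo, hi, hx⟩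
  have hbdd2 : BddAbove S2 :=
    bddAbove_boxSet f A₂ S2 fun x hx => by
      obtain ⟨lo, hi, _, _, _, hx⟩ := hx; exact ⟨lo, hi, hx⟩
  have hfin2 : S2.Finite :=
    finite_boxSet f A₂ S2 fun x hx => by
      obtain ⟨lo, hi, _, _, _, hx⟩ := hx; exact ⟨lo, hi, hx⟩
  have hSAne : SA.Nonempty :=
    ⟨f (boxInt A (bboxLo A hAne) (bboxLo A hAne)), bboxLo A hAne, bboxLo A hAne,
      le_rfl, Set.Icc_subset_Icc le_rfl hab, Set.mem_Icc.2 ⟨le_rfl, le_rfl⟩, rfl⟩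
  have hS1ne : S1.Nonempty :=
    ⟨f (boxInt A₁ (bboxLo A₁ h₁) (bboxLo A₁ h₁)), bboxLo A₁ h₁, bboxLo A₁ h₁,
      le_rfl, Set.Icc_subset_Icc le_rfl hab₁, Set.mem_Icc.2 ⟨le_rfl, le_rfl⟩, rfl⟩
  have hS2ne : S2.Nonempty :=
    ⟨f (boxInt A₂ (bboxLo A₂ h₂) (bboxLo A₂ h₂)), bboxLo A₂ h₂, bboxLo A₂ h₂,
      le_rfl, Set.Icc_subset_Icc le_rfl hab₂, Set.mem_Icc.2 ⟨le_rfl, le_rfl⟩, rfl⟩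
  -- decomposition machinery
  have hfe : ∀ B ⊆ A, f B = g (f B) (f ∅) := fun B hB =>
    hdec B hB B ∅ (Finset.disjoint_empty_right _) (Finset.union_empty _)
  have hsplit : ∀ lo hi : ℝ × ℝ, boxInt A lo hi = boxInt A₁ lo hi ∪ boxInt A₂ lo hi := by
    intro lo hi
    simp only [boxInt, ← hun, Finset.filter_union]
  have hkey : ∀ lo hi : ℝ × ℝ,
      f (boxInt A lo hi) = g (f (boxInt A₁ lo hi)) (f (boxInt A₂ lo hi)) :=
    fun lo hi => hdec _ (Finset.filter_subset _ _) _ _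
      (hdisj.mono (Finset.filter_subset _ _) (Finset.filter_subset _ _))
      (hsplit lo hi).symm
  have hA1only : ∀ lo hi : ℝ × ℝ, boxInt A₂ lo hi = ∅ →
      f (boxInt A lo hi) = f (boxInt A₁ lo hi) := by
    intro lo hi h0
    rw [hkey lo hi, h0]
    exact (hfe _ ((Finset.filter_subset _ _).trans hsub₁)).symm
  have hfull : ∀ lo hi : ℝ × ℝ, lo ≤ bboxLo A hAne → c.1 < hi.1 → c.2 < hi.2 →
      boxInt A₁ lo hi = A₁ := by
    intro lo hi hlo hx hy
    ext p
    simp only [mem_boxInt]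
    constructor
    · exact fun h => h.1
    · intro hp
      exact ⟨hp, hlo.trans (lo_le_mem hAne (hsub₁ hp)),
        le_of_lt (lt_trans (hbu₁ p hp).1 hx), le_of_lt (lt_trans (hbu₁ p hp).2 hy)⟩
  have hempty : ∀ lo hi : ℝ × ℝ, hi.1 < c.1 → boxInt A₂ lo hi = ∅ := by
    intro lo hi h
    rw [Finset.eq_empty_iff_forall_notMem]
    intro q hq
    rw [mem_boxInt] at hq
    have h1 := (hbu₂ q hq.1).1
    have h2 := hq.2.2.1
    linarith
  -- main proof
  rw [hOA, hO1, hO2]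
  apply le_antisymm
  · apply csSup_le hSAne
    rintro x ⟨lo, hi, hlohi, hsubb, hmemb, rfl⟩
    have hloa : lo ≤ bboxLo A hAne := (Set.mem_Icc.1 hmemb).1
    have hahi : bboxLo A hAne ≤ hi := (Set.mem_Icc.1 hmemb).2
    have hloa₁ : lo ≤ bboxLo A₁ h₁ := by rw [← haeq]; exact hloa
    by_cases hcase : boxInt A₂ lo hi = ∅
    · rw [hA1only lo hi hcase]
      refine le_max_of_le_left (le_csSup hbdd1 ?_)
      have ha₁hi : bboxLo A₁ h₁ ≤ hi := by rw [← haeq]; exact hahi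
      refine ⟨bboxLo A₁ h₁, hi ⊓ bboxHi A₁ h₁, le_inf ha₁hi hab₁,
        Set.Icc_subset_Icc le_rfl inf_le_right,
        Set.mem_Icc.2 ⟨le_rfl, le_inf ha₁hi hab₁⟩, ?_⟩
      rw [boxInt_hi_inf h₁, boxInt_lo_irrel h₁ hi le_rfl hloa₁]
    · obtain ⟨q, hq⟩ := Finset.nonempty_iff_ne_empty.2 hcase
      rw [mem_boxInt] at hq
      obtain ⟨hqA₂, hqlo, hqhi⟩ := hq
      have hchi1 : c.1 < hi.1 := lt_of_lt_of_le (hbu₂ q hqA₂).1 hqhi.1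
      have hchi2 : c.2 < hi.2 := lt_of_lt_of_le (hbu₂ q hqA₂).2 hqhi.2
      rw [hkey lo hi, hfull lo hi hloa hchi1 hchi2]
      refine le_max_of_le_right (hg₂ (f A₁) (le_csSup hbdd2 ?_))
      have ha₂hi : bboxLo A₂ h₂ ≤ hi := (lo_le_mem h₂ hqA₂).trans hqhi
      have hloa₂ : lo ≤ bboxLo A₂ h₂ := hloa₁.trans ha₁a₂
      refine ⟨bboxLo A₂ h₂, hi ⊓ bboxHi A₂ h₂, le_inf ha₂hi hab₂,
        Set.Icc_subset_Icc le_rfl inf_le_right,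
        Set.mem_Icc.2 ⟨le_rfl, le_inf ha₂hi hab₂⟩, ?_⟩
      rw [boxInt_hi_inf h₂, boxInt_lo_irrel h₂ hi le_rfl hloa₂]
  · apply max_le
    · apply csSup_le hS1ne
      rintro x ⟨lo, hi, hlohi, hsubb, hmemb, rfl⟩
      apply le_csSup hbddA
      have hhi₁ : hi ≤ bboxHi A₁ h₁ := (hsubb (Set.mem_Icc.2 ⟨hlohi, le_rfl⟩)).2
      refine ⟨lo, hi, hlohi,
        hsubb.trans (Set.Icc_subset_Icc (le_of_eq haeq) (by rw [hbeq]; exact hb₁b₂)), ?_, ?_⟩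
      · rw [haeq]; exact hmemb
      · rw [hA1only lo hi (hempty lo hi (lt_of_le_of_lt hhi₁.1 hb₁c.1))]
    · have hmem2 : sSup S2 ∈ S2 := hS2ne.csSup_mem hfin2
      obtain ⟨lo, hi, hlohi, hsubb, hmemb, heq⟩ := hmem2
      rw [heq]
      apply le_csSup hbddA
      have hloa₂ : lo ≤ bboxLo A₂ h₂ := (Set.mem_Icc.1 hmemb).1
      have ha₂hi : bboxLo A₂ h₂ ≤ hi := (Set.mem_Icc.1 hmemb).2
      have hhib₂ : hi ≤ bboxHi A₂ h₂ := (hsubb (Set.mem_Icc.2 ⟨hlohi, le_rfl⟩)).2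
      have hahi : bboxLo A hAne ≤ hi := by
        rw [haeq]; exact ha₁a₂.trans ha₂hi
      have hchi1 : c.1 < hi.1 := lt_of_lt_of_le hca₂.1 ha₂hi.1
      have hchi2 : c.2 < hi.2 := lt_of_lt_of_le hca₂.2 ha₂hi.2
      refine ⟨bboxLo A hAne, hi, hahi,
        Set.Icc_subset_Icc le_rfl (by rw [hbeq]; exact hhib₂),
        Set.mem_Icc.2 ⟨le_rfl, hahi⟩, ?_⟩
      have hAlo₂ : bboxLo A hAne ≤ bboxLo A₂ h₂ := by rw [haeq]; exact ha₁a₂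
      rw [hkey (bboxLo A hAne) hi, hfull (bboxLo A hAne) hi le_rfl hchi1 hchi2,
        boxInt_lo_irrel h₂ hi hAlo₂ hloa₂]
end

section
/- Let π be a permutation of {1,…,n} and suppose the index set {1,…,n} is partitioned into ρ consecutive blocks of sizes r_1, …, r_ρ (so Σ r_i = n) such that π is strictly increasing on each block. Then Σ_{j=2}^{n} log₂(1 + |π(j) − π(j−1)|) ≤ 2n + Σ_{i=1}^{ρ} r_i · log₂(n/r_i). -/
open Finset

private lemma chain_le' (b : ℕ → ℕ) (ρ : ℕ) (h : ∀ i < ρ, b i ≤ b (i+1)) :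
    ∀ j i, j ≤ i → i ≤ ρ → b j ≤ b i := by
  intro j i hji hiρ
  induction i with
  | zero => simp [Nat.le_zero.mp hji]
  | succ k ih =>
    rcases Nat.eq_or_lt_of_le hji with rfl | hlt
    · exact le_rfl
    · exact (ih (by omega) (by omega)).trans (h k (by omega))

private lemma telescope_Ioc (g : ℕ → ℝ) {a b : ℕ} (h : a ≤ b) :
    ∑ j ∈ Finset.Ioc a b, (g j - g (j-1)) = g b - g a := by
  induction b, h using Nat.le_induction with
  | base => simp
  | succ b hab ih =>
    rw [Finset.sum_Ioc_succ_top (by omega), ih]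
    simp

private lemma sum_blocks (F : ℕ → ℝ) (b : ℕ → ℕ) :
    ∀ ρ, (∀ i < ρ, b i ≤ b (i+1)) →
    ∑ j ∈ Finset.Ioc (b 0) (b ρ), F j
      = ∑ i ∈ Finset.Icc 1 ρ, ∑ j ∈ Finset.Ioc (b (i-1)) (b i), F j := by
  intro ρ
  induction ρ with
  | zero => simp
  | succ k ih =>
    intro h
    have h' : ∀ i < k, b i ≤ b (i+1) := fun i hi => h i (by omega)
    rw [Finset.sum_Icc_succ_top (by omega), ← ih h']
    have h0k : b 0 ≤ b k := chain_le' b k h' 0 k (by omega) le_rfl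
    rw [← Finset.sum_Ioc_consecutive F h0k (h k (by omega))]
    simp

/-- let `π` be a permutation of `{1,…,n}` and suppose `{1,…,n}` is
partitioned into `ρ` consecutive blocks, the `i`-th block being
`{b (i-1) + 1, …, b i}` (so its size is `r_i = b i − b (i−1)`, with `b 0 = 0`,
`b ρ = n` and `b` strictly increasing), on each of which `π` is strictly
increasing. Then `Σ_{j=2}^n log₂(1 + |π j − π (j−1)|) ≤ 2n + Σ_i r_i·log₂(n/r_i)`. -/
theorem runs_entropy_bound (n ρ : ℕ) (π : ℕ → ℕ)
    (hπ : Set.BijOn π (Set.Icc 1 n) (Set.Icc 1 n))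
    (b : ℕ → ℕ) (hb0 : b 0 = 0) (hbρ : b ρ = n)
    (hbmono : ∀ i < ρ, b i < b (i+1))
    (hinc : ∀ i ∈ Finset.Icc 1 ρ, ∀ j : ℕ, b (i-1) + 1 ≤ j → j < b i →
      π j < π (j+1)) :
    ∑ j ∈ Finset.Icc 2 n, Real.logb 2 (1 + |((π j : ℝ)) - ((π (j-1) : ℝ))|) ≤
      2 * (n : ℝ) + ∑ i ∈ Finset.Icc 1 ρ,
        ((b i - b (i-1) : ℕ) : ℝ) *
          Real.logb 2 ((n : ℝ) / ((b i - b (i-1) : ℕ) : ℝ)) := by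
  rcases Nat.eq_zero_or_pos ρ with hρ0 | hρpos
  · have hn0 : n = 0 := by rw [← hbρ, hρ0, hb0]
    simp [hn0, hρ0]
  -- now ρ ≥ 1, hence n ≥ 1
  have hble : ∀ i < ρ, b i ≤ b (i+1) := fun i hi => (hbmono i hi).le
  have hchain := chain_le' b ρ hble
  have hn1 : 1 ≤ n := by
    have h1 : b 0 < b 1 := hbmono 0 hρpos
    have h2 : b 1 ≤ b ρ := hchain 1 ρ hρpos le_rfl
    omega
  have hπle : ∀ j, 1 ≤ j → j ≤ n → π j ≤ n := fun j h1 h2 => (hπ.mapsTo ⟨h1, h2⟩).2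
  set A : ℕ → ℝ := fun j => if 2 ≤ j then 1 + |((π j : ℝ)) - ((π (j-1) : ℝ))| else 1 with hA
  have hA1 : ∀ j, (1:ℝ) ≤ A j := by
    intro j
    simp only [hA]
    split
    · have := abs_nonneg (((π j : ℝ)) - ((π (j-1) : ℝ))); linarith
    · exact le_rfl
  have hApos : ∀ j, (0:ℝ) < A j := fun j => lt_of_lt_of_le one_pos (hA1 j)
  -- rewrite LHS
  have hLHS : ∑ j ∈ Finset.Icc 2 n, Real.logb 2 (1 + |((π j : ℝ)) - ((π (j-1) : ℝ))|)
      = ∑ j ∈ Finset.Ioc 0 n, Real.logb 2 (A j) := by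
    have hset : Finset.Ioc 0 n = insert 1 (Finset.Icc 2 n) := by
      ext j; simp [Finset.mem_Ioc, Finset.mem_Icc]; omega
    rw [hset, Finset.sum_insert (by simp)]
    have hA1' : A 1 = 1 := by simp [hA]
    rw [hA1', Real.logb_one, zero_add]
    exact Finset.sum_congr rfl fun j hj => by
      rw [Finset.mem_Icc] at hj
      simp [hA, hj.1]
  rw [hLHS]
  rw [show Finset.Ioc 0 n = Finset.Ioc (b 0) (b ρ) by rw [hb0, hbρ]]
  rw [sum_blocks _ b ρ hble]
  have hlog2 : (0:ℝ) < Real.log 2 := Real.log_pos one_lt_two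
  -- key per-block bound
  have hblock : ∀ i ∈ Finset.Icc 1 ρ,
      ∑ j ∈ Finset.Ioc (b (i-1)) (b i), Real.logb 2 (A j)
        ≤ 2 * ((b i - b (i-1) : ℕ) : ℝ)
          + ((b i - b (i-1) : ℕ) : ℝ) * Real.logb 2 ((n : ℝ) / ((b i - b (i-1) : ℕ) : ℝ)) := by
    intro i hi'
    have hi := Finset.mem_Icc.mp hi'
    set l := b (i-1) with hl
    set u := b i with hu
    have hlu : l < u := by
      have := hbmono (i-1) (by omega)
      rwa [show i - 1 + 1 = i by omega] at this
    have hun : u ≤ n := by rw [← hbρ]; exact hchain i ρ hi.2 le_rfl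
    set r : ℕ := u - l with hr
    have hr1 : 1 ≤ r := by omega
    have hrcast : (r : ℝ) = (u : ℝ) - l := by
      rw [hr, Nat.cast_sub hlu.le]
    have hrpos : (0:ℝ) < r := by exact_mod_cast hr1
    have hrn : (r:ℝ) ≤ n := by exact_mod_cast (by omega : r ≤ n)
    have hnpos : (0:ℝ) < n := by exact_mod_cast hn1
    set c : ℝ := 4 * n / r with hc
    have hc4 : (4:ℝ) ≤ c := by
      rw [hc, le_div_iff₀ hrpos]; nlinarith
    have hcpos : (0:ℝ) < c := by linarith
    -- per-term tangent bound
    have hterm : ∀ j, Real.logb 2 (A j) ≤ (A j / c + Real.log c - 1) / Real.log 2 := by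
      intro j
      have h1 : Real.log (A j / c) ≤ A j / c - 1 :=
        Real.log_le_sub_one_of_pos (div_pos (hApos j) hcpos)
      rw [Real.log_div (ne_of_gt (hApos j)) (ne_of_gt hcpos)] at h1
      rw [Real.logb]
      gcongr
      linarith
    -- bound on the sum of A over the block
    have hAsum : ∑ j ∈ Finset.Ioc l u, A j ≤ (r:ℝ) + 2 * n := by
      have hsplit : Finset.Ioc l u = insert (l+1) (Finset.Ioc (l+1) u) := by
        ext j; simp only [Finset.mem_Ioc, Finset.mem_insert]; omega
      rw [hsplit, Finset.sum_insert (by simp)]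
      have hhead : A (l+1) ≤ 1 + n := by
        by_cases hl0 : l = 0
        · have : A (l+1) = 1 := by simp [hA, hl0]
          rw [this]; linarith
        · have h2 : 2 ≤ l + 1 := by omega
          have hp1 : (π (l+1) : ℝ) ≤ n := by
            exact_mod_cast hπle (l+1) (by omega) (by omega)
          have hp2 : (π l : ℝ) ≤ n := by
            exact_mod_cast hπle l (by omega) (by omega)
          have hq1 : (0:ℝ) ≤ (π (l+1) : ℝ) := Nat.cast_nonneg _
          have hq2 : (0:ℝ) ≤ (π l : ℝ) := Nat.cast_nonneg _
          simp only [hA, if_pos h2]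
          rw [show l + 1 - 1 = l from rfl]
          have : |((π (l+1) : ℝ)) - (π l : ℝ)| ≤ n := by
            rw [abs_sub_le_iff]; constructor <;> linarith
          linarith
      have htail : ∑ j ∈ Finset.Ioc (l+1) u, A j ≤ ((r:ℝ) - 1) + n := by
        have heq : ∀ j ∈ Finset.Ioc (l+1) u, A j = 1 + (((π j : ℝ)) - (π (j-1) : ℝ)) := by
          intro j hj
          rw [Finset.mem_Ioc] at hj
          have h2 : 2 ≤ j := by omega
          have hmono : π (j-1) < π j := by
            have := hinc i hi' (j-1) (by omega) (by omega)
            rwa [show j - 1 + 1 = j by omega] at this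
          have hmono' : ((π (j-1) : ℝ)) ≤ (π j : ℝ) := by exact_mod_cast hmono.le
          simp only [hA, if_pos h2]
          rw [abs_of_nonneg (by linarith)]
        rw [Finset.sum_congr rfl heq, Finset.sum_add_distrib, Finset.sum_const,
          Nat.card_Ioc, telescope_Ioc (fun j => (π j : ℝ)) hlu]
        have hcard : ((u - (l+1) : ℕ) : ℝ) = (r:ℝ) - 1 := by
          rw [Nat.cast_sub (by omega)]
          push_cast
          linarith [hrcast]
        have hpu : (π u : ℝ) ≤ n := by exact_mod_cast hπle u (by omega) hun
        have hpl : (0:ℝ) ≤ (π (l+1) : ℝ) := Nat.cast_nonneg _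
        rw [nsmul_eq_mul, mul_one, hcard]
        linarith
      linarith
    -- combine
    have hcard : (Finset.Ioc l u).card = r := Nat.card_Ioc l u
    calc ∑ j ∈ Finset.Ioc l u, Real.logb 2 (A j)
        ≤ ∑ j ∈ Finset.Ioc l u, (A j / c + Real.log c - 1) / Real.log 2 :=
          Finset.sum_le_sum fun j _ => hterm j
      _ = ((∑ j ∈ Finset.Ioc l u, A j) / c + (r:ℝ) * (Real.log c - 1)) / Real.log 2 := by
          rw [← Finset.sum_div, Finset.sum_sub_distrib, Finset.sum_add_distrib,
            Finset.sum_const, Finset.sum_const, ← Finset.sum_div, hcard]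
          ring
      _ ≤ (((r:ℝ) + 2*n) / c + (r:ℝ) * (Real.log c - 1)) / Real.log 2 := by
          gcongr
      _ ≤ ((r:ℝ) * Real.log c) / Real.log 2 := by
          have hrc : (r:ℝ) * c = 4 * n := by
            rw [hc, mul_div_assoc']
            field_simp
          have hkey : ((r:ℝ) + 2*n) / c ≤ r := by
            rw [div_le_iff₀ hcpos, hrc]
            linarith
          gcongr (?_ : ℝ) / _
          linarith
      _ = (r:ℝ) * Real.logb 2 c := by
          rw [Real.logb, mul_div_assoc]
      _ = 2 * (r:ℝ) + (r:ℝ) * Real.logb 2 ((n:ℝ) / r) := by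
          have hcc : c = 4 * ((n:ℝ) / r) := by rw [hc]; ring
          have hnr : ((n:ℝ) / r) ≠ 0 := ne_of_gt (div_pos hnpos hrpos)
          rw [hcc, Real.logb_mul (by norm_num) hnr]
          have h4 : Real.logb 2 (4:ℝ) = 2 := by
            rw [show (4:ℝ) = 2^(2:ℕ) by norm_num, Real.logb_pow,
              Real.logb_self_eq_one (by norm_num)]
            norm_num
          rw [h4]
          ring
  -- assemble
  refine le_trans (Finset.sum_le_sum hblock) ?_
  have hrsum : ∑ i ∈ Finset.Icc 1 ρ, ((b i - b (i-1) : ℕ) : ℝ) = n := by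
    have heq : ∀ i ∈ Finset.Icc 1 ρ, ((b i - b (i-1) : ℕ) : ℝ)
        = (fun k => (b k : ℝ)) i - (fun k => (b k : ℝ)) (i-1) := by
      intro i hi
      rw [Finset.mem_Icc] at hi
      have : b (i-1) ≤ b i := by
        have := hbmono (i-1) (by omega)
        rw [show i - 1 + 1 = i by omega] at this
        omega
      simp [Nat.cast_sub this]
    rw [Finset.sum_congr rfl heq, show Finset.Icc 1 ρ = Finset.Ioc 0 ρ from Finset.Icc_add_one_left_eq_Ioc 0 ρ,
      telescope_Ioc (fun k => (b k : ℝ)) (Nat.zero_le ρ)]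
    simp [hb0, hbρ]
  rw [Finset.sum_add_distrib]
  have : ∑ i ∈ Finset.Icc 1 ρ, 2 * ((b i - b (i-1) : ℕ) : ℝ) = 2 * n := by
    rw [← Finset.mul_sum, hrsum]
  rw [this]
end
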